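/- arXiv:1809.06940 — 3 statements merged into one kernel-verified Lean document; each statement's English description precedes it below -/
import Mathlib

section
/- If B is a locally ordered Cartesian bicategory, then its Karoubi bicategory Kar(B) is a locally ordered Cartesian bicategory. -/
universe u v

/-- A locally ordered bicategory: a bicategory whose hom-categories are
partially ordered sets (hence composition is strictly associative and unital,
since invertible 2-cells are equalities). -/
structure LoBicat : Type (max (u + 1) (v + 1)) where
  Obj : Type u
  Hom : Obj → Obj → Type v
  le : ∀ {A B : Obj}, Hom A B → Hom A B → Prop
  le_refl : ∀ {A B : Obj} (f : Hom A B), le f f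
  le_trans : ∀ {A B : Obj} {f g h : Hom A B}, le f g → le g h → le f h
  le_antisymm : ∀ {A B : Obj} {f g : Hom A B}, le f g → le g f → f = g
  idH : ∀ A : Obj, Hom A A
  comp : ∀ {A B C : Obj}, Hom A B → Hom B C → Hom A C
  comp_le : ∀ {A B C : Obj} {f f' : Hom A B} {g g' : Hom B C},
      le f f' → le g g' → le (comp f g) (comp f' g')
  id_comp : ∀ {A B : Obj} (f : Hom A B), comp (idH A) f = f
  comp_id : ∀ {A B : Obj} (f : Hom A B), comp f (idH B) = f
  comp_assoc : ∀ {A B C D : Obj} (f : Hom A B) (g : Hom B C) (h : Hom C D),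
      comp (comp f g) h = comp f (comp g h)

namespace LoBicat

/-- A map: a 1-cell with a right adjoint. -/
def IsMap (B : LoBicat) {A X : B.Obj} (f : B.Hom A X) : Prop :=
  ∃ g : B.Hom X A, B.le (B.idH A) (B.comp f g) ∧ B.le (B.comp g f) (B.idH X)

/-- A Cartesian structure on a locally ordered bicategory, after Carboni–Walters:
a tensor product (pseudofunctor with unit object `I` and coherent natural
isomorphisms ρ, λ, γ, α), a cocommutative comonoid structure `(d, t)` on each
object such that every arrow is a colax comonoid homomorphism, and `d`, `t`
have right adjoints. -/
structure CartStr (B : LoBicat) where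
  tens : B.Obj → B.Obj → B.Obj
  tensH : ∀ {A A' X Y : B.Obj}, B.Hom A X → B.Hom A' Y → B.Hom (tens A A') (tens X Y)
  tensH_le : ∀ {A A' X Y : B.Obj} {f f' : B.Hom A X} {g g' : B.Hom A' Y},
      B.le f f' → B.le g g' → B.le (tensH f g) (tensH f' g')
  tensH_id : ∀ A A' : B.Obj, tensH (B.idH A) (B.idH A') = B.idH (tens A A')
  tensH_comp :
    ∀ {A₁ A₂ A₃ X₁ X₂ X₃ : B.Obj} (f₁ : B.Hom A₁ A₂) (f₂ : B.Hom A₂ A₃)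
      (g₁ : B.Hom X₁ X₂) (g₂ : B.Hom X₂ X₃),
      tensH (B.comp f₁ f₂) (B.comp g₁ g₂) = B.comp (tensH f₁ g₁) (tensH f₂ g₂)
  I : B.Obj
  rho : ∀ X : B.Obj, B.Hom X (tens X I)
  rhoInv : ∀ X : B.Obj, B.Hom (tens X I) X
  rho_inv_left : ∀ X, B.comp (rho X) (rhoInv X) = B.idH X
  rho_inv_right : ∀ X, B.comp (rhoInv X) (rho X) = B.idH (tens X I)
  rho_nat : ∀ {X Y : B.Obj} (f : B.Hom X Y),
      B.comp f (rho Y) = B.comp (rho X) (tensH f (B.idH I))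
  lam : ∀ X : B.Obj, B.Hom X (tens I X)
  lamInv : ∀ X : B.Obj, B.Hom (tens I X) X
  lam_inv_left : ∀ X, B.comp (lam X) (lamInv X) = B.idH X
  lam_inv_right : ∀ X, B.comp (lamInv X) (lam X) = B.idH (tens I X)
  lam_nat : ∀ {X Y : B.Obj} (f : B.Hom X Y),
      B.comp f (lam Y) = B.comp (lam X) (tensH (B.idH I) f)
  gam : ∀ X Y : B.Obj, B.Hom (tens X Y) (tens Y X)
  gam_nat : ∀ {X Y X' Y' : B.Obj} (f : B.Hom X X') (g : B.Hom Y Y'),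
      B.comp (tensH f g) (gam X' Y') = B.comp (gam X Y) (tensH g f)
  alp : ∀ X Y Z : B.Obj, B.Hom (tens (tens X Y) Z) (tens X (tens Y Z))
  alpInv : ∀ X Y Z : B.Obj, B.Hom (tens X (tens Y Z)) (tens (tens X Y) Z)
  alp_inv_left : ∀ X Y Z, B.comp (alp X Y Z) (alpInv X Y Z) = B.idH _
  alp_inv_right : ∀ X Y Z, B.comp (alpInv X Y Z) (alp X Y Z) = B.idH _
  alp_nat : ∀ {X Y Z X' Y' Z' : B.Obj} (f : B.Hom X X') (g : B.Hom Y Y') (h : B.Hom Z Z'),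
      B.comp (tensH (tensH f g) h) (alp X' Y' Z') = B.comp (alp X Y Z) (tensH f (tensH g h))
  pentagon : ∀ X Y Z W : B.Obj,
      B.comp (alp (tens X Y) Z W) (alp X Y (tens Z W)) =
        B.comp (tensH (alp X Y Z) (B.idH W))
          (B.comp (alp X (tens Y Z) W) (tensH (B.idH X) (alp Y Z W)))
  triangle : ∀ X Y : B.Obj,
      B.comp (tensH (rho X) (B.idH Y)) (alp X I Y) = tensH (B.idH X) (lam Y)
  hexagon : ∀ X Y Z : B.Obj,
      B.comp (B.comp (alp X Y Z) (gam X (tens Y Z))) (alp Y Z X) =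
        B.comp (tensH (gam X Y) (B.idH Z)) (B.comp (alp Y X Z) (tensH (B.idH Y) (gam X Z)))
  symm : ∀ X Y : B.Obj, B.comp (gam X Y) (gam Y X) = B.idH (tens X Y)
  d : ∀ X : B.Obj, B.Hom X (tens X X)
  t : ∀ X : B.Obj, B.Hom X I
  coassoc : ∀ X : B.Obj,
      B.comp (B.comp (d X) (tensH (d X) (B.idH X))) (alp X X X) =
        B.comp (d X) (tensH (B.idH X) (d X))
  counit_rho : ∀ X, B.comp (d X) (tensH (B.idH X) (t X)) = rho X
  counit_lam : ∀ X, B.comp (d X) (tensH (t X) (B.idH X)) = lam X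
  cocomm : ∀ X, B.comp (d X) (gam X X) = d X
  colax_d : ∀ {X Y : B.Obj} (f : B.Hom X Y),
      B.le (B.comp f (d Y)) (B.comp (d X) (tensH f f))
  colax_t : ∀ {X Y : B.Obj} (f : B.Hom X Y), B.le (B.comp f (t Y)) (t X)
  d_map : ∀ X : B.Obj, B.IsMap (d X)
  t_map : ∀ X : B.Obj, B.IsMap (t X)

/-- The Karoubi bicategory of a locally ordered bicategory: objects are
idempotent 1-cells, 1-cells are modules between idempotents, 2-cells are
inequalities. -/
def Kar (B : LoBicat) : LoBicat where
  Obj := Σ A : B.Obj, { a : B.Hom A A // B.comp a a = a }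
  Hom X Y := { R : B.Hom X.1 Y.1 // B.comp X.2.1 R = R ∧ B.comp R Y.2.1 = R }
  le R S := B.le R.1 S.1
  le_refl _ := B.le_refl _
  le_trans h1 h2 := B.le_trans h1 h2
  le_antisymm h1 h2 := Subtype.ext (B.le_antisymm h1 h2)
  idH X := ⟨X.2.1, X.2.2, X.2.2⟩
  comp R S := ⟨B.comp R.1 S.1,
    by rw [← B.comp_assoc, R.2.1],
    by rw [B.comp_assoc, S.2.2]⟩
  comp_le h1 h2 := B.comp_le h1 h2
  id_comp R := Subtype.ext R.2.1
  comp_id R := Subtype.ext R.2.2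
  comp_assoc f g h := Subtype.ext (B.comp_assoc f.1 g.1 h.1)

/-- The bicategory of monads and modules in a locally ordered bicategory. -/
def ModB (B : LoBicat) : LoBicat where
  Obj := Σ A : B.Obj, { a : B.Hom A A // B.le (B.idH A) a ∧ B.le (B.comp a a) a }
  Hom X Y := { m : B.Hom X.1 Y.1 // B.le (B.comp X.2.1 m) m ∧ B.le (B.comp m Y.2.1) m }
  le m n := B.le m.1 n.1
  le_refl _ := B.le_refl _
  le_trans h1 h2 := B.le_trans h1 h2
  le_antisymm h1 h2 := Subtype.ext (B.le_antisymm h1 h2)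
  idH X := ⟨X.2.1, X.2.2.2, X.2.2.2⟩
  comp m n := ⟨B.comp m.1 n.1,
    by rw [← B.comp_assoc]; exact B.comp_le m.2.1 (B.le_refl _),
    by rw [B.comp_assoc]; exact B.comp_le (B.le_refl _) n.2.2⟩
  comp_le h1 h2 := B.comp_le h1 h2
  id_comp := by
    rintro X Y m
    refine Subtype.ext (B.le_antisymm m.2.1 ?_)
    have h := B.comp_le (f := B.idH X.1) (f' := X.2.1) X.2.2.1 (B.le_refl m.1)
    rwa [B.id_comp] at h
  comp_id := by
    rintro X Y m
    refine Subtype.ext (B.le_antisymm m.2.2 ?_)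
    have h := B.comp_le (g := B.idH Y.1) (g' := Y.2.1) (B.le_refl m.1) Y.2.2.1
    rwa [B.comp_id] at h
  comp_assoc f g h := Subtype.ext (B.comp_assoc f.1 g.1 h.1)

/-- A pseudofunctor between locally ordered bicategories (necessarily strict,
since invertible 2-cells in a poset are equalities). -/
structure LoFunctor (B D : LoBicat) where
  obj : B.Obj → D.Obj
  map : ∀ {A X : B.Obj}, B.Hom A X → D.Hom (obj A) (obj X)
  map_le : ∀ {A X : B.Obj} {f g : B.Hom A X}, B.le f g → D.le (map f) (map g)
  map_id : ∀ A : B.Obj, map (B.idH A) = D.idH (obj A)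
  map_comp : ∀ {A X Y : B.Obj} (f : B.Hom A X) (g : B.Hom X Y),
      map (B.comp f g) = D.comp (map f) (map g)

/-- Equivalence of two objects inside a locally ordered bicategory. -/
def EquivOb (D : LoBicat) (X Y : D.Obj) : Prop :=
  ∃ (u : D.Hom X Y) (v : D.Hom Y X), D.comp u v = D.idH X ∧ D.comp v u = D.idH Y

/-- A biequivalence of locally ordered bicategories: biessentially surjective
and a local order-isomorphism (fully faithful on hom-posets). -/
def IsBiequiv {B D : LoBicat} (F : LoFunctor B D) : Prop :=
  (∀ Y : D.Obj, ∃ X : B.Obj, EquivOb D (F.obj X) Y) ∧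
  (∀ {A X : B.Obj} (f g : B.Hom A X), D.le (F.map f) (F.map g) → B.le f g) ∧
  (∀ {A X : B.Obj} (h : D.Hom (F.obj A) (F.obj X)), ∃ f : B.Hom A X, F.map f = h)

/-- The product of two locally ordered bicategories, formed componentwise. -/
def prodLo (B D : LoBicat) : LoBicat where
  Obj := B.Obj × D.Obj
  Hom X Y := B.Hom X.1 Y.1 × D.Hom X.2 Y.2
  le f g := B.le f.1 g.1 ∧ D.le f.2 g.2
  le_refl f := ⟨B.le_refl _, D.le_refl _⟩
  le_trans h1 h2 := ⟨B.le_trans h1.1 h2.1, D.le_trans h1.2 h2.2⟩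
  le_antisymm h1 h2 := Prod.ext (B.le_antisymm h1.1 h2.1) (D.le_antisymm h1.2 h2.2)
  idH X := (B.idH X.1, D.idH X.2)
  comp f g := (B.comp f.1 g.1, D.comp f.2 g.2)
  comp_le h1 h2 := ⟨B.comp_le h1.1 h2.1, D.comp_le h1.2 h2.2⟩
  id_comp f := Prod.ext (B.id_comp f.1) (D.id_comp f.2)
  comp_id f := Prod.ext (B.comp_id f.1) (D.comp_id f.2)
  comp_assoc f g h := Prod.ext (B.comp_assoc f.1 g.1 h.1) (D.comp_assoc f.2 g.2 h.2)

/-- The canonical functor `Kar (B × D) → Kar B × Kar D` induced by the pair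
of projections. -/
def karProj (B D : LoBicat) : LoFunctor (Kar (prodLo B D)) (prodLo (Kar B) (Kar D)) where
  obj X := (⟨X.1.1, ⟨X.2.1.1, congrArg Prod.fst X.2.2⟩⟩,
            ⟨X.1.2, ⟨X.2.1.2, congrArg Prod.snd X.2.2⟩⟩)
  map R := (⟨R.1.1, congrArg Prod.fst R.2.1, congrArg Prod.fst R.2.2⟩,
            ⟨R.1.2, congrArg Prod.snd R.2.1, congrArg Prod.snd R.2.2⟩)
  map_le h := h
  map_id _ := rfl
  map_comp _ _ := rfl

end LoBicat

open LoBicat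

namespace LoBicat

variable {B : LoBicat}

lemma absa {A C D : B.Obj} {x : B.Hom A A} {r : B.Hom A C} {k : B.Hom C D}
    (h : B.comp x r = r) : B.comp x (B.comp r k) = B.comp r k := by
  rw [← B.comp_assoc, h]

lemma absb {A C D : B.Obj} {r : B.Hom A C} {y : B.Hom C C} {k : B.Hom C D}
    (h : B.comp r y = r) : B.comp r (B.comp y k) = B.comp r k := by
  rw [← B.comp_assoc, h]

lemma cancel1 {A C D : B.Obj} {u : B.Hom A C} {v : B.Hom C A} {k : B.Hom A D}
    (h : B.comp u v = B.idH A) : B.comp u (B.comp v k) = k := by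
  rw [← B.comp_assoc, h, B.id_comp]

namespace CartStr

variable {hB : B.CartStr}

lemma mtt {A₁ X₁ A₂ X₂ A₃ X₃ : B.Obj} (f₁ : B.Hom A₁ A₂) (g₁ : B.Hom X₁ X₂)
    (f₂ : B.Hom A₂ A₃) (g₂ : B.Hom X₂ X₃) :
    B.comp (hB.tensH f₁ g₁) (hB.tensH f₂ g₂) = hB.tensH (B.comp f₁ f₂) (B.comp g₁ g₂) :=
  (hB.tensH_comp f₁ f₂ g₁ g₂).symm

lemma mtt' {A₁ X₁ A₂ X₂ A₃ X₃ C : B.Obj} (f₁ : B.Hom A₁ A₂) (g₁ : B.Hom X₁ X₂)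
    (f₂ : B.Hom A₂ A₃) (g₂ : B.Hom X₂ X₃) (k : B.Hom (hB.tens A₃ X₃) C) :
    B.comp (hB.tensH f₁ g₁) (B.comp (hB.tensH f₂ g₂) k)
      = B.comp (hB.tensH (B.comp f₁ f₂) (B.comp g₁ g₂)) k := by
  rw [← B.comp_assoc, mtt]

lemma rnat {X Y : B.Obj} (f : B.Hom X Y) :
    B.comp (hB.rho X) (hB.tensH f (B.idH hB.I)) = B.comp f (hB.rho Y) :=
  (hB.rho_nat f).symm

lemma rnat' {X Y C : B.Obj} (f : B.Hom X Y) (k : B.Hom (hB.tens Y hB.I) C) :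
    B.comp (hB.rho X) (B.comp (hB.tensH f (B.idH hB.I)) k)
      = B.comp f (B.comp (hB.rho Y) k) := by
  rw [← B.comp_assoc, rnat, B.comp_assoc]

lemma lnat {X Y : B.Obj} (f : B.Hom X Y) :
    B.comp (hB.lam X) (hB.tensH (B.idH hB.I) f) = B.comp f (hB.lam Y) :=
  (hB.lam_nat f).symm

lemma lnat' {X Y C : B.Obj} (f : B.Hom X Y) (k : B.Hom (hB.tens hB.I Y) C) :
    B.comp (hB.lam X) (B.comp (hB.tensH (B.idH hB.I) f) k)
      = B.comp f (B.comp (hB.lam Y) k) := by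
  rw [← B.comp_assoc, lnat, B.comp_assoc]

lemma gnat {X Y X' Y' : B.Obj} (f : B.Hom X X') (g : B.Hom Y Y') :
    B.comp (hB.gam X Y) (hB.tensH g f) = B.comp (hB.tensH f g) (hB.gam X' Y') :=
  (hB.gam_nat f g).symm

lemma gnat' {X Y X' Y' C : B.Obj} (f : B.Hom X X') (g : B.Hom Y Y')
    (k : B.Hom (hB.tens Y' X') C) :
    B.comp (hB.gam X Y) (B.comp (hB.tensH g f) k)
      = B.comp (hB.tensH f g) (B.comp (hB.gam X' Y') k) := by
  rw [← B.comp_assoc, gnat, B.comp_assoc]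

lemma anat {X Y Z X' Y' Z' : B.Obj} (f : B.Hom X X') (g : B.Hom Y Y') (h : B.Hom Z Z') :
    B.comp (hB.alp X Y Z) (hB.tensH f (hB.tensH g h))
      = B.comp (hB.tensH (hB.tensH f g) h) (hB.alp X' Y' Z') :=
  (hB.alp_nat f g h).symm

lemma anat' {X Y Z X' Y' Z' C : B.Obj} (f : B.Hom X X') (g : B.Hom Y Y') (h : B.Hom Z Z')
    (k : B.Hom (hB.tens X' (hB.tens Y' Z')) C) :
    B.comp (hB.alp X Y Z) (B.comp (hB.tensH f (hB.tensH g h)) k)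
      = B.comp (hB.tensH (hB.tensH f g) h) (B.comp (hB.alp X' Y' Z') k) := by
  rw [← B.comp_assoc, anat, B.comp_assoc]

lemma ainat {X Y Z X' Y' Z' : B.Obj} (f : B.Hom X X') (g : B.Hom Y Y') (h : B.Hom Z Z') :
    B.comp (hB.alpInv X Y Z) (hB.tensH (hB.tensH f g) h)
      = B.comp (hB.tensH f (hB.tensH g h)) (hB.alpInv X' Y' Z') :=
  calc B.comp (hB.alpInv X Y Z) (hB.tensH (hB.tensH f g) h)
      = B.comp (hB.alpInv X Y Z)
          (B.comp (hB.tensH (hB.tensH f g) h)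
            (B.comp (hB.alp X' Y' Z') (hB.alpInv X' Y' Z'))) := by
        rw [hB.alp_inv_left, B.comp_id]
    _ = B.comp (hB.alpInv X Y Z)
          (B.comp (B.comp (hB.tensH (hB.tensH f g) h) (hB.alp X' Y' Z'))
            (hB.alpInv X' Y' Z')) := by rw [B.comp_assoc]
    _ = B.comp (hB.alpInv X Y Z)
          (B.comp (B.comp (hB.alp X Y Z) (hB.tensH f (hB.tensH g h)))
            (hB.alpInv X' Y' Z')) := by rw [hB.alp_nat]
    _ = B.comp (hB.tensH f (hB.tensH g h)) (hB.alpInv X' Y' Z') := by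
        rw [B.comp_assoc, cancel1 (hB.alp_inv_right X Y Z)]

lemma ainat' {X Y Z X' Y' Z' C : B.Obj} (f : B.Hom X X') (g : B.Hom Y Y') (h : B.Hom Z Z')
    (k : B.Hom (hB.tens (hB.tens X' Y') Z') C) :
    B.comp (hB.alpInv X Y Z) (B.comp (hB.tensH (hB.tensH f g) h) k)
      = B.comp (hB.tensH f (hB.tensH g h)) (B.comp (hB.alpInv X' Y' Z') k) := by
  rw [← B.comp_assoc, ainat, B.comp_assoc]

lemma rinv {X Y : B.Obj} (f : B.Hom X Y) :
    B.comp (hB.tensH f (B.idH hB.I)) (hB.rhoInv Y) = B.comp (hB.rhoInv X) f :=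
  calc B.comp (hB.tensH f (B.idH hB.I)) (hB.rhoInv Y)
      = B.comp (B.comp (hB.rhoInv X) (hB.rho X))
          (B.comp (hB.tensH f (B.idH hB.I)) (hB.rhoInv Y)) := by
        rw [hB.rho_inv_right, B.id_comp]
    _ = B.comp (hB.rhoInv X)
          (B.comp (B.comp (hB.rho X) (hB.tensH f (B.idH hB.I))) (hB.rhoInv Y)) := by
        simp only [LoBicat.comp_assoc]
    _ = B.comp (hB.rhoInv X) (B.comp (B.comp f (hB.rho Y)) (hB.rhoInv Y)) := by
        rw [rnat]
    _ = B.comp (hB.rhoInv X) f := by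
        rw [B.comp_assoc, hB.rho_inv_left, B.comp_id]

lemma rinv' {X Y C : B.Obj} (f : B.Hom X Y) (k : B.Hom Y C) :
    B.comp (hB.tensH f (B.idH hB.I)) (B.comp (hB.rhoInv Y) k)
      = B.comp (hB.rhoInv X) (B.comp f k) := by
  rw [← B.comp_assoc, rinv, B.comp_assoc]

lemma linv {X Y : B.Obj} (f : B.Hom X Y) :
    B.comp (hB.tensH (B.idH hB.I) f) (hB.lamInv Y) = B.comp (hB.lamInv X) f :=
  calc B.comp (hB.tensH (B.idH hB.I) f) (hB.lamInv Y)
      = B.comp (B.comp (hB.lamInv X) (hB.lam X))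
          (B.comp (hB.tensH (B.idH hB.I) f) (hB.lamInv Y)) := by
        rw [hB.lam_inv_right, B.id_comp]
    _ = B.comp (hB.lamInv X)
          (B.comp (B.comp (hB.lam X) (hB.tensH (B.idH hB.I) f)) (hB.lamInv Y)) := by
        simp only [LoBicat.comp_assoc]
    _ = B.comp (hB.lamInv X) (B.comp (B.comp f (hB.lam Y)) (hB.lamInv Y)) := by
        rw [lnat]
    _ = B.comp (hB.lamInv X) f := by
        rw [B.comp_assoc, hB.lam_inv_left, B.comp_id]

lemma linv' {X Y C : B.Obj} (f : B.Hom X Y) (k : B.Hom Y C) :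
    B.comp (hB.tensH (B.idH hB.I) f) (B.comp (hB.lamInv Y) k)
      = B.comp (hB.lamInv X) (B.comp f k) := by
  rw [← B.comp_assoc, linv, B.comp_assoc]

end CartStr

end LoBicat

namespace LoBicat.CartStr

variable {B : LoBicat} {hB : B.CartStr}

lemma anat3 {X Y Z X' Y' Z' V : B.Obj} (f : B.Hom X X') (g : B.Hom Y Y') (h : B.Hom Z Z')
    (v : B.Hom (hB.tens Y' Z') V) :
    B.comp (hB.alp X Y Z) (hB.tensH f (B.comp (hB.tensH g h) v))
      = B.comp (hB.tensH (hB.tensH f g) h)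
          (B.comp (hB.alp X' Y' Z') (hB.tensH (B.idH X') v)) := by
  rw [show hB.tensH f (B.comp (hB.tensH g h) v)
        = B.comp (hB.tensH f (hB.tensH g h)) (hB.tensH (B.idH X') v) from by
      rw [mtt, B.comp_id],
    anat']

end LoBicat.CartStr

namespace LoBicat.CartStr

variable {B : LoBicat} (hB : B.CartStr)

section Aux

variable {X₀ Y₀ Z₀ W₀ : B.Obj} {x : B.Hom X₀ X₀} {y : B.Hom Y₀ Y₀}
  {z : B.Hom Z₀ Z₀} {w : B.Hom W₀ W₀}

lemma tensIdem (hx : B.comp x x = x) (hy : B.comp y y = y) :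
    B.comp (hB.tensH x y) (hB.tensH x y) = hB.tensH x y := by rw [mtt, hx, hy]

lemma rhoMemR (hx : B.comp x x = x) :
    B.comp (B.comp x (hB.rho X₀)) (hB.tensH x (B.idH hB.I)) = B.comp x (hB.rho X₀) := by
  rw [B.comp_assoc, rnat, absa hx]

lemma rhoInvMemL (hx : B.comp x x = x) :
    B.comp (hB.tensH x (B.idH hB.I)) (B.comp (hB.rhoInv X₀) x)
      = B.comp (hB.rhoInv X₀) x := by rw [rinv', hx]

lemma rhoInvL (hx : B.comp x x = x) :
    B.comp (B.comp x (hB.rho X₀)) (B.comp (hB.rhoInv X₀) x) = x := by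
  rw [B.comp_assoc, cancel1 (hB.rho_inv_left X₀), hx]

lemma rhoInvR (hx : B.comp x x = x) :
    B.comp (B.comp (hB.rhoInv X₀) x) (B.comp x (hB.rho X₀))
      = hB.tensH x (B.idH hB.I) := by
  rw [B.comp_assoc, absa hx, hB.rho_nat, cancel1 (hB.rho_inv_right X₀)]

lemma rhoNat {R : B.Hom X₀ Y₀} (hR1 : B.comp x R = R) (hR2 : B.comp R y = R) :
    B.comp R (B.comp y (hB.rho Y₀))
      = B.comp (B.comp x (hB.rho X₀)) (hB.tensH R (B.idH hB.I)) := by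
  simp only [LoBicat.comp_assoc, rnat, absa, absb, hR1, hR2]

lemma lamMemR (hx : B.comp x x = x) :
    B.comp (B.comp x (hB.lam X₀)) (hB.tensH (B.idH hB.I) x) = B.comp x (hB.lam X₀) := by
  rw [B.comp_assoc, lnat, absa hx]

lemma lamInvMemL (hx : B.comp x x = x) :
    B.comp (hB.tensH (B.idH hB.I) x) (B.comp (hB.lamInv X₀) x)
      = B.comp (hB.lamInv X₀) x := by rw [linv', hx]

lemma lamInvL (hx : B.comp x x = x) :
    B.comp (B.comp x (hB.lam X₀)) (B.comp (hB.lamInv X₀) x) = x := by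
  rw [B.comp_assoc, cancel1 (hB.lam_inv_left X₀), hx]

lemma lamInvR (hx : B.comp x x = x) :
    B.comp (B.comp (hB.lamInv X₀) x) (B.comp x (hB.lam X₀))
      = hB.tensH (B.idH hB.I) x := by
  rw [B.comp_assoc, absa hx, hB.lam_nat, cancel1 (hB.lam_inv_right X₀)]

lemma lamNat {R : B.Hom X₀ Y₀} (hR1 : B.comp x R = R) (hR2 : B.comp R y = R) :
    B.comp R (B.comp y (hB.lam Y₀))
      = B.comp (B.comp x (hB.lam X₀)) (hB.tensH (B.idH hB.I) R) := by
  simp only [LoBicat.comp_assoc, lnat, absa, absb, hR1, hR2]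

lemma gamMemL (hx : B.comp x x = x) (hy : B.comp y y = y) :
    B.comp (hB.tensH x y) (B.comp (hB.tensH x y) (hB.gam X₀ Y₀))
      = B.comp (hB.tensH x y) (hB.gam X₀ Y₀) :=
  absa (tensIdem hB hx hy)

lemma gamMemR (hx : B.comp x x = x) (hy : B.comp y y = y) :
    B.comp (B.comp (hB.tensH x y) (hB.gam X₀ Y₀)) (hB.tensH y x)
      = B.comp (hB.tensH x y) (hB.gam X₀ Y₀) := by
  rw [B.comp_assoc, gnat, mtt', hx, hy]

lemma gamNat {X₀' Y₀' : B.Obj} {x' : B.Hom X₀' X₀'} {y' : B.Hom Y₀' Y₀'}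
    {R : B.Hom X₀ X₀'} {S : B.Hom Y₀ Y₀'}
    (hR1 : B.comp x R = R) (hR2 : B.comp R x' = R)
    (hS1 : B.comp y S = S) (hS2 : B.comp S y' = S) :
    B.comp (hB.tensH R S) (B.comp (hB.tensH x' y') (hB.gam X₀' Y₀'))
      = B.comp (B.comp (hB.tensH x y) (hB.gam X₀ Y₀)) (hB.tensH S R) := by
  rw [mtt', hR2, hS2, B.comp_assoc, gnat, mtt', hR1, hS1]

lemma alpMemL (hx : B.comp x x = x) (hy : B.comp y y = y) (hz : B.comp z z = z) :
    B.comp (hB.tensH (hB.tensH x y) z)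
        (B.comp (hB.tensH (hB.tensH x y) z) (hB.alp X₀ Y₀ Z₀))
      = B.comp (hB.tensH (hB.tensH x y) z) (hB.alp X₀ Y₀ Z₀) := by
  rw [mtt', mtt, hx, hy, hz]

lemma alpMemR (hx : B.comp x x = x) (hy : B.comp y y = y) (hz : B.comp z z = z) :
    B.comp (B.comp (hB.tensH (hB.tensH x y) z) (hB.alp X₀ Y₀ Z₀))
        (hB.tensH x (hB.tensH y z))
      = B.comp (hB.tensH (hB.tensH x y) z) (hB.alp X₀ Y₀ Z₀) := by
  rw [B.comp_assoc, anat, mtt', mtt, hx, hy, hz]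

lemma alpInvMemL (hx : B.comp x x = x) (hy : B.comp y y = y) (hz : B.comp z z = z) :
    B.comp (hB.tensH x (hB.tensH y z))
        (B.comp (hB.tensH x (hB.tensH y z)) (hB.alpInv X₀ Y₀ Z₀))
      = B.comp (hB.tensH x (hB.tensH y z)) (hB.alpInv X₀ Y₀ Z₀) := by
  rw [mtt', mtt, hx, hy, hz]

lemma alpInvMemR (hx : B.comp x x = x) (hy : B.comp y y = y) (hz : B.comp z z = z) :
    B.comp (B.comp (hB.tensH x (hB.tensH y z)) (hB.alpInv X₀ Y₀ Z₀))
        (hB.tensH (hB.tensH x y) z)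
      = B.comp (hB.tensH x (hB.tensH y z)) (hB.alpInv X₀ Y₀ Z₀) := by
  rw [B.comp_assoc, ainat, mtt', mtt, hx, hy, hz]

lemma alpInvLeft (hx : B.comp x x = x) (hy : B.comp y y = y) (hz : B.comp z z = z) :
    B.comp (B.comp (hB.tensH (hB.tensH x y) z) (hB.alp X₀ Y₀ Z₀))
        (B.comp (hB.tensH x (hB.tensH y z)) (hB.alpInv X₀ Y₀ Z₀))
      = hB.tensH (hB.tensH x y) z := by
  rw [B.comp_assoc, anat', hB.alp_inv_left, B.comp_id, mtt, mtt, hx, hy, hz]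

lemma alpInvRight (hx : B.comp x x = x) (hy : B.comp y y = y) (hz : B.comp z z = z) :
    B.comp (B.comp (hB.tensH x (hB.tensH y z)) (hB.alpInv X₀ Y₀ Z₀))
        (B.comp (hB.tensH (hB.tensH x y) z) (hB.alp X₀ Y₀ Z₀))
      = hB.tensH x (hB.tensH y z) := by
  rw [B.comp_assoc, ainat', hB.alp_inv_right, B.comp_id, mtt, mtt, hx, hy, hz]

lemma alpNat {X₀' Y₀' Z₀' : B.Obj} {x' : B.Hom X₀' X₀'} {y' : B.Hom Y₀' Y₀'}
    {z' : B.Hom Z₀' Z₀'} {f : B.Hom X₀ X₀'} {g : B.Hom Y₀ Y₀'} {h : B.Hom Z₀ Z₀'}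
    (hf1 : B.comp x f = f) (hf2 : B.comp f x' = f)
    (hg1 : B.comp y g = g) (hg2 : B.comp g y' = g)
    (hh1 : B.comp z h = h) (hh2 : B.comp h z' = h) :
    B.comp (hB.tensH (hB.tensH f g) h)
        (B.comp (hB.tensH (hB.tensH x' y') z') (hB.alp X₀' Y₀' Z₀'))
      = B.comp (B.comp (hB.tensH (hB.tensH x y) z) (hB.alp X₀ Y₀ Z₀))
          (hB.tensH f (hB.tensH g h)) := by
  rw [mtt', mtt, hf2, hg2, hh2, B.comp_assoc, anat, mtt', mtt, hf1, hg1, hh1]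

lemma symmAux (hx : B.comp x x = x) (hy : B.comp y y = y) :
    B.comp (B.comp (hB.tensH x y) (hB.gam X₀ Y₀))
        (B.comp (hB.tensH y x) (hB.gam Y₀ X₀)) = hB.tensH x y := by
  rw [B.comp_assoc, gnat', mtt', hx, hy, hB.symm, B.comp_id]

lemma dMemR (hx : B.comp x x = x) :
    B.comp (B.comp x (B.comp (hB.d X₀) (hB.tensH x x))) (hB.tensH x x)
      = B.comp x (B.comp (hB.d X₀) (hB.tensH x x)) := by
  rw [B.comp_assoc, B.comp_assoc, mtt, hx]

lemma cocommAux (hx : B.comp x x = x) :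
    B.comp (B.comp x (B.comp (hB.d X₀) (hB.tensH x x)))
        (B.comp (hB.tensH x x) (hB.gam X₀ X₀))
      = B.comp x (B.comp (hB.d X₀) (hB.tensH x x)) := by
  rw [B.comp_assoc, B.comp_assoc, mtt', hx, hB.gam_nat, absb (hB.cocomm X₀)]

end Aux

end LoBicat.CartStr

namespace LoBicat.CartStr

variable {B : LoBicat} (hB : B.CartStr)

section Aux2

variable {X₀ Y₀ Z₀ W₀ : B.Obj} {x : B.Hom X₀ X₀} {y : B.Hom Y₀ Y₀}
  {z : B.Hom Z₀ Z₀} {w : B.Hom W₀ W₀}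

lemma pentagonAux (hx : B.comp x x = x) (hy : B.comp y y = y)
    (hz : B.comp z z = z) (hw : B.comp w w = w) :
    B.comp
        (B.comp (hB.tensH (hB.tensH (hB.tensH x y) z) w)
          (hB.alp (hB.tens X₀ Y₀) Z₀ W₀))
        (B.comp (hB.tensH (hB.tensH x y) (hB.tensH z w))
          (hB.alp X₀ Y₀ (hB.tens Z₀ W₀)))
      = B.comp
          (hB.tensH (B.comp (hB.tensH (hB.tensH x y) z) (hB.alp X₀ Y₀ Z₀)) w)
          (B.comp
            (B.comp (hB.tensH (hB.tensH x (hB.tensH y z)) w)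
              (hB.alp X₀ (hB.tens Y₀ Z₀) W₀))
            (hB.tensH x
              (B.comp (hB.tensH (hB.tensH y z) w) (hB.alp Y₀ Z₀ W₀)))) := by
  simp only [LoBicat.comp_assoc, mtt, mtt', anat, anat', anat3, absa, absb, hx, hy, hz, hw,
    LoBicat.id_comp, LoBicat.comp_id]
  rw [hB.pentagon]
  simp only [LoBicat.comp_assoc, mtt, mtt', anat, anat', anat3, absa, absb, hx, hy, hz, hw,
    LoBicat.id_comp, LoBicat.comp_id]

lemma triangleAux (hx : B.comp x x = x) (hy : B.comp y y = y) :
    B.comp (hB.tensH (B.comp x (hB.rho X₀)) y)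
        (B.comp (hB.tensH (hB.tensH x (B.idH hB.I)) y) (hB.alp X₀ hB.I Y₀))
      = hB.tensH x (B.comp y (hB.lam Y₀)) := by
  simp only [LoBicat.comp_assoc, mtt, mtt', rnat, rnat', absa, absb, hx, hy,
    LoBicat.id_comp, LoBicat.comp_id]
  rw [show hB.tensH (B.comp x (hB.rho X₀)) y
        = B.comp (hB.tensH x y) (hB.tensH (hB.rho X₀) (B.idH Y₀)) from by
      rw [mtt, B.comp_id],
    B.comp_assoc, hB.triangle, mtt, B.comp_id]

lemma hexagonAux (hx : B.comp x x = x) (hy : B.comp y y = y) (hz : B.comp z z = z) :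
    B.comp
        (B.comp (B.comp (hB.tensH (hB.tensH x y) z) (hB.alp X₀ Y₀ Z₀))
          (B.comp (hB.tensH x (hB.tensH y z)) (hB.gam X₀ (hB.tens Y₀ Z₀))))
        (B.comp (hB.tensH (hB.tensH y z) x) (hB.alp Y₀ Z₀ X₀))
      = B.comp (hB.tensH (B.comp (hB.tensH x y) (hB.gam X₀ Y₀)) z)
          (B.comp
            (B.comp (hB.tensH (hB.tensH y x) z) (hB.alp Y₀ X₀ Z₀))
            (hB.tensH y (B.comp (hB.tensH x z) (hB.gam X₀ Z₀)))) := by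
  simp only [LoBicat.comp_assoc, mtt, mtt', anat, anat', anat3, gnat, gnat', absa, absb,
    hx, hy, hz, LoBicat.id_comp, LoBicat.comp_id]
  rw [show B.comp (hB.alp X₀ Y₀ Z₀)
        (B.comp (hB.gam X₀ (hB.tens Y₀ Z₀)) (hB.alp Y₀ Z₀ X₀))
      = B.comp (B.comp (hB.alp X₀ Y₀ Z₀) (hB.gam X₀ (hB.tens Y₀ Z₀)))
          (hB.alp Y₀ Z₀ X₀) from (B.comp_assoc _ _ _).symm,
    hB.hexagon]
  simp only [LoBicat.comp_assoc, mtt, mtt', anat, anat', anat3, gnat, gnat', absa, absb,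
    hx, hy, hz, LoBicat.id_comp, LoBicat.comp_id]

end Aux2

end LoBicat.CartStr

namespace LoBicat.CartStr

variable {B : LoBicat} (hB : B.CartStr)

section Aux3

variable {X₀ Y₀ : B.Obj} {x : B.Hom X₀ X₀} {y : B.Hom Y₀ Y₀}

lemma xd_le (hx : B.comp x x = x) :
    B.le (B.comp x (hB.d X₀)) (B.comp x (B.comp (hB.d X₀) (hB.tensH x x))) := by
  have h := B.comp_le (B.le_refl x) (hB.colax_d x)
  rwa [absa hx] at h

lemma hDw (hx : B.comp x x = x) :
    B.le (B.comp x (B.comp (hB.d X₀) (hB.tensH x x)))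
      (B.comp (hB.d X₀) (hB.tensH x x)) := by
  have h := B.comp_le (hB.colax_d x) (B.le_refl (hB.tensH x x))
  rwa [B.comp_assoc, B.comp_assoc, mtt, hx] at h

lemma key1 (hx : B.comp x x = x) :
    B.le (B.comp x (B.comp (hB.d X₀) (hB.tensH x (B.idH X₀))))
      (B.comp x (B.comp (hB.d X₀) (hB.tensH x x))) := by
  have h := B.comp_le (xd_le hB hx) (B.le_refl (hB.tensH x (B.idH X₀)))
  rwa [B.comp_assoc, B.comp_assoc, B.comp_assoc, mtt, hx, B.comp_id] at h

lemma key2 (hx : B.comp x x = x) :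
    B.le (B.comp x (B.comp (hB.d X₀) (hB.tensH (B.idH X₀) x)))
      (B.comp x (B.comp (hB.d X₀) (hB.tensH x x))) := by
  have h := B.comp_le (xd_le hB hx) (B.le_refl (hB.tensH (B.idH X₀) x))
  rwa [B.comp_assoc, B.comp_assoc, B.comp_assoc, mtt, hx, B.comp_id] at h

lemma coassocAux (hx : B.comp x x = x) :
    B.comp
        (B.comp (B.comp x (B.comp (hB.d X₀) (hB.tensH x x)))
          (hB.tensH (B.comp x (B.comp (hB.d X₀) (hB.tensH x x))) x))
        (B.comp (hB.tensH (hB.tensH x x) x) (hB.alp X₀ X₀ X₀))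
      = B.comp (B.comp x (B.comp (hB.d X₀) (hB.tensH x x)))
          (hB.tensH x (B.comp x (B.comp (hB.d X₀) (hB.tensH x x)))) := by
  -- normalize both sides
  simp only [LoBicat.comp_assoc, mtt, mtt', absa, absb, hx]
  -- goal should now be:
  -- comp x (comp d (comp (tensH D x) α)) = comp x (comp d (tensH x D)) with D spelled out
  have eM : B.comp x (B.comp (hB.d X₀)
        (B.comp (hB.tensH (B.comp (hB.d X₀) (hB.tensH x x)) x) (hB.alp X₀ X₀ X₀)))
      = B.comp x (B.comp (hB.d X₀) (hB.tensH x (B.comp (hB.d X₀) (hB.tensH x x)))) := by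
    calc B.comp x (B.comp (hB.d X₀)
          (B.comp (hB.tensH (B.comp (hB.d X₀) (hB.tensH x x)) x) (hB.alp X₀ X₀ X₀)))
        = B.comp x (B.comp (hB.d X₀)
            (B.comp (hB.tensH (hB.d X₀) (B.idH X₀))
              (B.comp (hB.tensH (hB.tensH x x) x) (hB.alp X₀ X₀ X₀)))) := by
          rw [mtt', B.id_comp]
      _ = B.comp x (B.comp (hB.d X₀)
            (B.comp (hB.tensH (hB.d X₀) (B.idH X₀))
              (B.comp (hB.alp X₀ X₀ X₀) (hB.tensH x (hB.tensH x x))))) := by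
          rw [hB.alp_nat]
      _ = B.comp x (B.comp (B.comp (B.comp (hB.d X₀) (hB.tensH (hB.d X₀) (B.idH X₀)))
            (hB.alp X₀ X₀ X₀)) (hB.tensH x (hB.tensH x x))) := by
          simp only [LoBicat.comp_assoc]
      _ = B.comp x (B.comp (B.comp (hB.d X₀) (hB.tensH (B.idH X₀) (hB.d X₀)))
            (hB.tensH x (hB.tensH x x))) := by rw [hB.coassoc]
      _ = B.comp x (B.comp (hB.d X₀) (hB.tensH x (B.comp (hB.d X₀) (hB.tensH x x)))) := by
          simp only [LoBicat.comp_assoc]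
          rw [mtt, B.id_comp]
  apply B.le_antisymm
  ·
    have a : B.le
        (B.comp x (B.comp (hB.d X₀)
          (B.comp (hB.tensH (B.comp x (B.comp (hB.d X₀) (hB.tensH x x))) x)
            (hB.alp X₀ X₀ X₀))))
        (B.comp x (B.comp (hB.d X₀)
          (B.comp (hB.tensH (B.comp (hB.d X₀) (hB.tensH x x)) x) (hB.alp X₀ X₀ X₀)))) :=
      B.comp_le (B.le_refl x) (B.comp_le (B.le_refl (hB.d X₀))
        (B.comp_le (hB.tensH_le (hDw hB hx) (B.le_refl x)) (B.le_refl (hB.alp X₀ X₀ X₀))))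
    have dd : B.le
        (B.comp x (B.comp (hB.d X₀) (hB.tensH x (B.comp (hB.d X₀) (hB.tensH x x)))))
        (B.comp x (B.comp (hB.d X₀) (hB.tensH x (B.comp x (B.comp (hB.d X₀) (hB.tensH x x)))))) := by
      have h := B.comp_le (key1 hB hx)
        (B.le_refl (hB.tensH (B.idH X₀) (B.comp (hB.d X₀) (hB.tensH x x))))
      simpa only [LoBicat.comp_assoc, mtt, mtt', LoBicat.comp_id, LoBicat.id_comp] using h
    rw [eM] at a
    exact B.le_trans a dd
  · have c : B.le
        (B.comp x (B.comp (hB.d X₀) (hB.tensH x (B.comp x (B.comp (hB.d X₀) (hB.tensH x x))))))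
        (B.comp x (B.comp (hB.d X₀) (hB.tensH x (B.comp (hB.d X₀) (hB.tensH x x))))) :=
      B.comp_le (B.le_refl x) (B.comp_le (B.le_refl (hB.d X₀))
        (hB.tensH_le (B.le_refl x) (hDw hB hx)))
    have bb : B.le
        (B.comp x (B.comp (hB.d X₀)
          (B.comp (hB.tensH (B.comp (hB.d X₀) (hB.tensH x x)) x) (hB.alp X₀ X₀ X₀))))
        (B.comp x (B.comp (hB.d X₀)
          (B.comp (hB.tensH (B.comp x (B.comp (hB.d X₀) (hB.tensH x x))) x)
            (hB.alp X₀ X₀ X₀)))) := by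
      have h := B.comp_le (key2 hB hx)
        (B.le_refl (B.comp (hB.tensH (B.comp (hB.d X₀) (hB.tensH x x)) (B.idH X₀))
          (hB.alp X₀ X₀ X₀)))
      simpa only [LoBicat.comp_assoc, mtt, mtt', LoBicat.comp_id, LoBicat.id_comp] using h
    rw [← eM] at c
    exact B.le_trans c bb

end Aux3

end LoBicat.CartStr

namespace LoBicat.CartStr

variable {B : LoBicat} (hB : B.CartStr)

section Aux4

variable {X₀ Y₀ : B.Obj} {x : B.Hom X₀ X₀} {y : B.Hom Y₀ Y₀}

lemma counitRhoAux (hx : B.comp x x = x) :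
    B.comp (B.comp x (B.comp (hB.d X₀) (hB.tensH x x)))
        (hB.tensH x (B.comp x (hB.t X₀)))
      = B.comp x (hB.rho X₀) := by
  simp only [LoBicat.comp_assoc, mtt, mtt', absa, absb, hx]
  -- goal: comp x (comp d (tensH x (comp x t))) = comp x (rho X₀)
  apply B.le_antisymm
  · have ha := B.comp_le (B.le_refl x) (B.comp_le (B.le_refl (hB.d X₀))
      (hB.tensH_le (B.le_refl x) (hB.colax_t x)))
    have hb : B.comp x (B.comp (hB.d X₀) (hB.tensH x (hB.t X₀)))
        = B.comp x (hB.rho X₀) := by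
      rw [show hB.tensH x (hB.t X₀) = B.comp (hB.tensH (B.idH X₀) (hB.t X₀))
            (hB.tensH x (B.idH hB.I)) from by rw [mtt, B.id_comp, B.comp_id],
        ← B.comp_assoc (hB.d X₀), hB.counit_rho, rnat, absa hx]
    rw [hb] at ha
    exact ha
  · have ha := B.comp_le (B.le_refl x)
      (B.comp_le (xd_le hB hx) (B.le_refl (hB.tensH (B.idH X₀) (hB.t X₀))))
    simp only [LoBicat.comp_assoc, mtt, mtt', absa, absb, hx,
      LoBicat.comp_id, LoBicat.id_comp] at ha
    rw [hB.counit_rho] at ha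
    exact ha

lemma counitLamAux (hx : B.comp x x = x) :
    B.comp (B.comp x (B.comp (hB.d X₀) (hB.tensH x x)))
        (hB.tensH (B.comp x (hB.t X₀)) x)
      = B.comp x (hB.lam X₀) := by
  simp only [LoBicat.comp_assoc, mtt, mtt', absa, absb, hx]
  apply B.le_antisymm
  · have ha := B.comp_le (B.le_refl x) (B.comp_le (B.le_refl (hB.d X₀))
      (hB.tensH_le (hB.colax_t x) (B.le_refl x)))
    have hb : B.comp x (B.comp (hB.d X₀) (hB.tensH (hB.t X₀) x))
        = B.comp x (hB.lam X₀) := by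
      rw [show hB.tensH (hB.t X₀) x = B.comp (hB.tensH (hB.t X₀) (B.idH X₀))
            (hB.tensH (B.idH hB.I) x) from by rw [mtt, B.id_comp, B.comp_id],
        ← B.comp_assoc (hB.d X₀), hB.counit_lam, lnat, absa hx]
    rw [hb] at ha
    exact ha
  · have ha := B.comp_le (B.le_refl x)
      (B.comp_le (xd_le hB hx) (B.le_refl (hB.tensH (hB.t X₀) (B.idH X₀))))
    simp only [LoBicat.comp_assoc, mtt, mtt', absa, absb, hx,
      LoBicat.comp_id, LoBicat.id_comp] at ha
    rw [hB.counit_lam] at ha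
    exact ha

lemma colaxDAux {R : B.Hom X₀ Y₀} (hx : B.comp x x = x)
    (hR1 : B.comp x R = R) (hR2 : B.comp R y = R) :
    B.le (B.comp R (B.comp y (B.comp (hB.d Y₀) (hB.tensH y y))))
      (B.comp (B.comp x (B.comp (hB.d X₀) (hB.tensH x x))) (hB.tensH R R)) := by
  have h := B.comp_le (B.le_refl x) (B.comp_le (hB.colax_d R) (B.le_refl (hB.tensH y y)))
  simp only [LoBicat.comp_assoc, mtt, mtt', absa, absb, hR1, hR2] at h ⊢
  exact h

lemma colaxTAux {R : B.Hom X₀ Y₀} (hR1 : B.comp x R = R) (hR2 : B.comp R y = R) :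
    B.le (B.comp R (B.comp y (hB.t Y₀))) (B.comp x (hB.t X₀)) := by
  rw [absb hR2, ← absa hR1]
  exact B.comp_le (B.le_refl x) (hB.colax_t R)

lemma eMemL (hx : B.comp x x = x) (ds : B.Hom (hB.tens X₀ X₀) X₀) :
    B.comp (hB.tensH x x) (B.comp (hB.tensH x x) (B.comp ds x))
      = B.comp (hB.tensH x x) (B.comp ds x) :=
  absa (tensIdem hB hx hx)

lemma eMemR (hx : B.comp x x = x) (ds : B.Hom (hB.tens X₀ X₀) X₀) :
    B.comp (B.comp (hB.tensH x x) (B.comp ds x)) x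
      = B.comp (hB.tensH x x) (B.comp ds x) := by
  rw [B.comp_assoc, B.comp_assoc, hx]

lemma dUnit (hx : B.comp x x = x) {ds : B.Hom (hB.tens X₀ X₀) X₀}
    (h1 : B.le (B.idH X₀) (B.comp (hB.d X₀) ds)) :
    B.le x (B.comp (B.comp x (B.comp (hB.d X₀) (hB.tensH x x)))
      (B.comp (hB.tensH x x) (B.comp ds x))) := by
  have s1 := B.comp_le (B.le_refl x) (B.comp_le h1 (B.le_refl x))
  rw [B.id_comp, hx] at s1
  -- s1 : x ≤ comp x (comp (comp d ds) x)
  have s2 := B.comp_le (xd_le hB hx) (B.le_refl (B.comp ds x))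
  simp only [LoBicat.comp_assoc] at s1 s2
  simp only [LoBicat.comp_assoc, mtt', hx]
  exact B.le_trans s1 s2

lemma dCounit (hx : B.comp x x = x) {ds : B.Hom (hB.tens X₀ X₀) X₀}
    (h2 : B.le (B.comp ds (hB.d X₀)) (B.idH (hB.tens X₀ X₀))) :
    B.le (B.comp (B.comp (hB.tensH x x) (B.comp ds x))
        (B.comp x (B.comp (hB.d X₀) (hB.tensH x x))))
      (hB.tensH x x) := by
  have c1 := B.comp_le (B.le_refl (hB.tensH x x)) (B.comp_le (B.le_refl ds)
    (B.comp_le (hB.colax_d x) (B.le_refl (hB.tensH x x))))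
  have c2 := B.comp_le h2 (B.le_refl (hB.tensH x x))
  rw [B.comp_assoc, B.id_comp] at c2
  -- c2 : comp ds (comp d e) ≤ e
  have c3 := B.comp_le (B.le_refl (hB.tensH x x)) c2
  rw [mtt, hx] at c3
  simp only [LoBicat.comp_assoc, mtt, mtt', absa, absb, hx] at c1 ⊢
  exact B.le_trans c1 c3

lemma tsMemR (hx : B.comp x x = x) (ts : B.Hom hB.I X₀) :
    B.comp (B.comp ts x) x = B.comp ts x := by
  rw [B.comp_assoc, hx]

lemma tUnit (hx : B.comp x x = x) {ts : B.Hom hB.I X₀}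
    (h1 : B.le (B.idH X₀) (B.comp (hB.t X₀) ts)) :
    B.le x (B.comp (B.comp x (hB.t X₀)) (B.comp ts x)) := by
  have s1 := B.comp_le (B.le_refl x) (B.comp_le h1 (B.le_refl x))
  rw [B.id_comp, hx] at s1
  simp only [LoBicat.comp_assoc] at s1 ⊢
  exact s1

lemma tCounit (hx : B.comp x x = x) {ts : B.Hom hB.I X₀}
    (h2 : B.le (B.comp ts (hB.t X₀)) (B.idH hB.I)) :
    B.le (B.comp (B.comp ts x) (B.comp x (hB.t X₀))) (B.idH hB.I) := by
  have c1 := B.comp_le (B.le_refl ts) (hB.colax_t x)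
  simp only [LoBicat.comp_assoc, absa, hx]
  exact B.le_trans c1 h2

end Aux4

end LoBicat.CartStr

namespace LoBicat.CartStr

variable {B : LoBicat}

/-- The Cartesian structure on the Karoubi bicategory induced by a Cartesian
structure on the base locally ordered bicategory. -/
def kar (hB : B.CartStr) : (Kar B).CartStr where
  tens X Y := ⟨hB.tens X.1 Y.1, hB.tensH X.2.1 Y.2.1, tensIdem hB X.2.2 Y.2.2⟩
  tensH {A A' X Y} R S := ⟨hB.tensH R.1 S.1,
    by show B.comp (hB.tensH A.2.1 A'.2.1) (hB.tensH R.1 S.1) = hB.tensH R.1 S.1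
       rw [mtt, R.2.1, S.2.1],
    by show B.comp (hB.tensH R.1 S.1) (hB.tensH X.2.1 Y.2.1) = hB.tensH R.1 S.1
       rw [mtt, R.2.2, S.2.2]⟩
  tensH_le h1 h2 := hB.tensH_le h1 h2
  tensH_id A A' := Subtype.ext rfl
  tensH_comp f₁ f₂ g₁ g₂ := Subtype.ext (hB.tensH_comp f₁.1 f₂.1 g₁.1 g₂.1)
  I := ⟨hB.I, B.idH hB.I, B.id_comp _⟩
  rho X := ⟨B.comp X.2.1 (hB.rho X.1), absa X.2.2, rhoMemR hB X.2.2⟩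
  rhoInv X := ⟨B.comp (hB.rhoInv X.1) X.2.1, rhoInvMemL hB X.2.2,
    by rw [B.comp_assoc, X.2.2]⟩
  rho_inv_left X := Subtype.ext (rhoInvL hB X.2.2)
  rho_inv_right X := Subtype.ext (rhoInvR hB X.2.2)
  rho_nat {X Y} R := Subtype.ext (rhoNat hB R.2.1 R.2.2)
  lam X := ⟨B.comp X.2.1 (hB.lam X.1), absa X.2.2, lamMemR hB X.2.2⟩
  lamInv X := ⟨B.comp (hB.lamInv X.1) X.2.1, lamInvMemL hB X.2.2,
    by rw [B.comp_assoc, X.2.2]⟩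
  lam_inv_left X := Subtype.ext (lamInvL hB X.2.2)
  lam_inv_right X := Subtype.ext (lamInvR hB X.2.2)
  lam_nat {X Y} R := Subtype.ext (lamNat hB R.2.1 R.2.2)
  gam X Y := ⟨B.comp (hB.tensH X.2.1 Y.2.1) (hB.gam X.1 Y.1),
    gamMemL hB X.2.2 Y.2.2, gamMemR hB X.2.2 Y.2.2⟩
  gam_nat {X Y X' Y'} R S :=
    Subtype.ext (gamNat hB R.2.1 R.2.2 S.2.1 S.2.2)
  alp X Y Z := ⟨B.comp (hB.tensH (hB.tensH X.2.1 Y.2.1) Z.2.1) (hB.alp X.1 Y.1 Z.1),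
    alpMemL hB X.2.2 Y.2.2 Z.2.2, alpMemR hB X.2.2 Y.2.2 Z.2.2⟩
  alpInv X Y Z := ⟨B.comp (hB.tensH X.2.1 (hB.tensH Y.2.1 Z.2.1)) (hB.alpInv X.1 Y.1 Z.1),
    alpInvMemL hB X.2.2 Y.2.2 Z.2.2, alpInvMemR hB X.2.2 Y.2.2 Z.2.2⟩
  alp_inv_left X Y Z := Subtype.ext (alpInvLeft hB X.2.2 Y.2.2 Z.2.2)
  alp_inv_right X Y Z := Subtype.ext (alpInvRight hB X.2.2 Y.2.2 Z.2.2)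
  alp_nat {X Y Z X' Y' Z'} f g h :=
    Subtype.ext (alpNat hB f.2.1 f.2.2 g.2.1 g.2.2 h.2.1 h.2.2)
  pentagon X Y Z W := Subtype.ext (pentagonAux hB X.2.2 Y.2.2 Z.2.2 W.2.2)
  triangle X Y := Subtype.ext (triangleAux hB X.2.2 Y.2.2)
  hexagon X Y Z := Subtype.ext (hexagonAux hB X.2.2 Y.2.2 Z.2.2)
  symm X Y := Subtype.ext (symmAux hB X.2.2 Y.2.2)
  d X := ⟨B.comp X.2.1 (B.comp (hB.d X.1) (hB.tensH X.2.1 X.2.1)), absa X.2.2,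
    dMemR hB X.2.2⟩
  t X := ⟨B.comp X.2.1 (hB.t X.1), absa X.2.2, B.comp_id _⟩
  coassoc X := Subtype.ext (coassocAux hB X.2.2)
  counit_rho X := Subtype.ext (counitRhoAux hB X.2.2)
  counit_lam X := Subtype.ext (counitLamAux hB X.2.2)
  cocomm X := Subtype.ext (cocommAux hB X.2.2)
  colax_d {X Y} R := colaxDAux hB X.2.2 R.2.1 R.2.2
  colax_t {X Y} R := colaxTAux hB R.2.1 R.2.2
  d_map X := by
    obtain ⟨ds, h1, h2⟩ := hB.d_map X.1
    exact ⟨⟨B.comp (hB.tensH X.2.1 X.2.1) (B.comp ds X.2.1),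
      eMemL hB X.2.2 ds, eMemR hB X.2.2 ds⟩,
      dUnit hB X.2.2 h1, dCounit hB X.2.2 h2⟩
  t_map X := by
    obtain ⟨ts, h1, h2⟩ := hB.t_map X.1
    exact ⟨⟨B.comp ts X.2.1, B.id_comp _, tsMemR hB X.2.2 ts⟩,
      tUnit hB X.2.2 h1, tCounit hB X.2.2 h2⟩

end LoBicat.CartStr

/-- If `B` is a locally ordered Cartesian bicategory, then its
Karoubi bicategory `Kar B` is a locally ordered Cartesian bicategory too. -/
theorem statement1 (B : LoBicat) (hB : B.CartStr) : Nonempty (Kar B).CartStr := by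
  exact ⟨LoBicat.CartStr.kar hB⟩
end

section
/- If B is a locally ordered Cartesian bicategory, then the bicategory Mod(B) of monads and modules in B is a locally ordered Cartesian bicategory. -/
universe u v

open LoBicat

/-! In a locally ordered bicategory a module `m : (A, a) → (C, c)` absorbs the monads:
`a m = m = m c`. Hence a 1-cell `f` with `a f = f c` lifts to the module `a f`, compatibly
with composition and tensor, and the structure cells `ρ, λ, γ, α` of `B`, being natural,
intertwine tensored monads, so they lift to `Mod B` together with all their equations.
The comonoid on `(A, a)` is `d (a ⊗ a)`, `t`: colaxity of `a` makes `d (a ⊗ a)` absorb `a`,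
and conjugating the right adjoints of `d` and `t` by the monads gives right adjoints in
`Mod B`. -/

namespace LoBicat

variable {B : LoBicat}

instance {A X : B.Obj} : PartialOrder (B.Hom A X) where
  le := B.le
  le_refl := B.le_refl
  le_trans _ _ _ := B.le_trans
  le_antisymm _ _ := B.le_antisymm

theorem le_comp_of_one_le_left {A X : B.Obj} {a : B.Hom A A} (ha : B.le (B.idH A) a)
    (f : B.Hom A X) : B.le f (B.comp a f) := by
  simpa only [B.id_comp] using B.comp_le ha (B.le_refl f)

theorem le_comp_of_one_le_right {A X : B.Obj} {a : B.Hom X X} (ha : B.le (B.idH X) a)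
    (f : B.Hom A X) : B.le f (B.comp f a) := by
  simpa only [B.comp_id] using B.comp_le (B.le_refl f) ha

theorem comp_inv_eq_inv_comp {A A' C C' : B.Obj} {f : B.Hom A C} {g : B.Hom A' C'}
    {u : B.Hom A A'} {u' : B.Hom A' A} {w : B.Hom C C'} {w' : B.Hom C' C}
    (hu : B.comp u' u = B.idH A') (hw : B.comp w w' = B.idH C)
    (h : B.comp f w = B.comp u g) : B.comp g w' = B.comp u' f := by
  calc B.comp g w' = B.comp (B.comp u' (B.comp u g)) w' := by
        rw [← B.comp_assoc, hu, B.id_comp]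
    _ = B.comp u' f := by rw [← h, B.comp_assoc, B.comp_assoc, hw, B.comp_id]

namespace ModB

theorem monad_comp_self (X : (ModB B).Obj) : B.comp X.2.1 X.2.1 = X.2.1 :=
  B.le_antisymm X.2.2.2 (le_comp_of_one_le_left X.2.2.1 _)

theorem monad_comp {X Y : (ModB B).Obj} (m : (ModB B).Hom X Y) : B.comp X.2.1 m.1 = m.1 :=
  B.le_antisymm m.2.1 (le_comp_of_one_le_left X.2.2.1 _)

theorem comp_monad {X Y : (ModB B).Obj} (m : (ModB B).Hom X Y) : B.comp m.1 Y.2.1 = m.1 :=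
  B.le_antisymm m.2.2 (le_comp_of_one_le_right Y.2.2.1 _)

-- Reducible, so that equations of `B` are accepted as `Intertwines` proofs when rewriting
-- with the `lift` lemmas; `tensOb` and `unitOb` are reducible for the same reason.
abbrev Intertwines (X Y : (ModB B).Obj) (f : B.Hom X.1 Y.1) : Prop :=
  B.comp X.2.1 f = B.comp f Y.2.1

theorem intertwines_idH (X : (ModB B).Obj) : Intertwines X X (B.idH X.1) := by
  rw [Intertwines, B.comp_id, B.id_comp]

theorem Intertwines.comp {X Y Z : (ModB B).Obj} {f : B.Hom X.1 Y.1} {g : B.Hom Y.1 Z.1}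
    (hf : Intertwines X Y f) (hg : Intertwines Y Z g) : Intertwines X Z (B.comp f g) := by
  rw [Intertwines, ← B.comp_assoc, hf, B.comp_assoc, hg, B.comp_assoc]

def lift (X Y : (ModB B).Obj) (f : B.Hom X.1 Y.1) (hf : Intertwines X Y f) :
    (ModB B).Hom X Y :=
  ⟨B.comp X.2.1 f,
    by rw [← B.comp_assoc, monad_comp_self]; exact B.le_refl _,
    by rw [B.comp_assoc, ← hf, ← B.comp_assoc, monad_comp_self]; exact B.le_refl _⟩

theorem lift_comp_lift {X Y Z : (ModB B).Obj} {f : B.Hom X.1 Y.1} {g : B.Hom Y.1 Z.1}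
    (hf : Intertwines X Y f) (hg : Intertwines Y Z g) :
    (ModB B).comp (lift X Y f hf) (lift Y Z g hg) = lift X Z (B.comp f g) (hf.comp hg) := by
  apply Subtype.ext
  show B.comp (B.comp X.2.1 f) (B.comp Y.2.1 g) = B.comp X.2.1 (B.comp f g)
  rw [← B.comp_assoc, B.comp_assoc X.2.1, ← hf, ← B.comp_assoc X.2.1, monad_comp_self,
    B.comp_assoc]

theorem idH_eq_lift (X : (ModB B).Obj) :
    (ModB B).idH X = lift X X (B.idH X.1) (intertwines_idH X) :=
  Subtype.ext (B.comp_id _).symm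

theorem lift_congr {X Y : (ModB B).Obj} {f g : B.Hom X.1 Y.1} {hf : Intertwines X Y f}
    {hg : Intertwines X Y g} (e : f = g) : lift X Y f hf = lift X Y g hg := by
  subst e; rfl

theorem lift_eq_lift {X Y : (ModB B).Obj} {f g : B.Hom X.1 Y.1} {hf : Intertwines X Y f}
    {hg : Intertwines X Y g} (e : B.comp X.2.1 f = B.comp X.2.1 g) :
    lift X Y f hf = lift X Y g hg :=
  Subtype.ext e

theorem comp_lift_eq_lift_comp {X Y X' Y' : (ModB B).Obj} (m : (ModB B).Hom X Y)
    (k : (ModB B).Hom X' Y') {u : B.Hom X.1 X'.1} {v : B.Hom Y.1 Y'.1}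
    (hu : Intertwines X X' u) (hv : Intertwines Y Y' v) (h : B.comp m.1 v = B.comp u k.1) :
    (ModB B).comp m (lift Y Y' v hv) = (ModB B).comp (lift X X' u hu) k := by
  apply Subtype.ext
  show B.comp m.1 (B.comp Y.2.1 v) = B.comp (B.comp X.2.1 u) k.1
  rw [← B.comp_assoc, comp_monad, h, hu, B.comp_assoc, monad_comp]

/-- The right adjoint of `f c` in `Mod B` is `c g a`, where `g` is right adjoint to `f`. -/
theorem isMap_of_val_eq_comp {X Y : (ModB B).Obj} (m : (ModB B).Hom X Y) {f : B.Hom X.1 Y.1}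
    (hm : m.1 = B.comp f Y.2.1) (hf : B.IsMap f) (hcolax : B.le (B.comp X.2.1 f) (B.comp f Y.2.1)) :
    (ModB B).IsMap m := by
  obtain ⟨g, hunit, hcounit⟩ := hf
  refine ⟨⟨B.comp Y.2.1 (B.comp g X.2.1), ?_, ?_⟩, ?_, ?_⟩
  · rw [← B.comp_assoc, monad_comp_self]; exact B.le_refl _
  · rw [B.comp_assoc, B.comp_assoc, monad_comp_self]; exact B.le_refl _
  · show B.le X.2.1 (B.comp m.1 (B.comp Y.2.1 (B.comp g X.2.1)))
    calc X.2.1 ≤ B.comp (B.comp f g) X.2.1 := le_comp_of_one_le_left hunit _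
      _ ≤ B.comp f (B.comp Y.2.1 (B.comp g X.2.1)) := by
          rw [B.comp_assoc]; exact B.comp_le (B.le_refl f) (le_comp_of_one_le_left Y.2.2.1 _)
      _ = B.comp m.1 (B.comp Y.2.1 (B.comp g X.2.1)) := by
          rw [hm, B.comp_assoc, ← B.comp_assoc Y.2.1 Y.2.1, monad_comp_self]
  · show B.le (B.comp (B.comp Y.2.1 (B.comp g X.2.1)) m.1) Y.2.1
    calc B.comp (B.comp Y.2.1 (B.comp g X.2.1)) m.1
          = B.comp Y.2.1 (B.comp g (B.comp (B.comp X.2.1 f) Y.2.1)) := by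
          simp only [hm, B.comp_assoc]
      _ ≤ B.comp Y.2.1 (B.comp g (B.comp (B.comp f Y.2.1) Y.2.1)) :=
          B.comp_le (B.le_refl _) (B.comp_le (B.le_refl g) (B.comp_le hcolax (B.le_refl _)))
      _ = B.comp Y.2.1 (B.comp (B.comp g f) Y.2.1) := by
          rw [B.comp_assoc f, monad_comp_self, B.comp_assoc]
      _ ≤ B.comp Y.2.1 (B.comp (B.idH Y.1) Y.2.1) :=
          B.comp_le (B.le_refl _) (B.comp_le hcounit (B.le_refl _))
      _ = Y.2.1 := by rw [B.id_comp, monad_comp_self]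

section Cartesian

variable (hB : B.CartStr)

abbrev tensOb (X Y : (ModB B).Obj) : (ModB B).Obj :=
  ⟨hB.tens X.1 Y.1, hB.tensH X.2.1 Y.2.1,
    by rw [← hB.tensH_id]; exact hB.tensH_le X.2.2.1 Y.2.2.1,
    by rw [← hB.tensH_comp, monad_comp_self, monad_comp_self]; exact B.le_refl _⟩

abbrev unitOb : (ModB B).Obj :=
  ⟨hB.I, B.idH hB.I, B.le_refl _, by rw [B.id_comp]; exact B.le_refl _⟩

def tensHom {X X' Y Y' : (ModB B).Obj} (m : (ModB B).Hom X Y) (n : (ModB B).Hom X' Y') :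
    (ModB B).Hom (tensOb hB X X') (tensOb hB Y Y') :=
  ⟨hB.tensH m.1 n.1,
    by have h := hB.tensH_le m.2.1 n.2.1; rwa [hB.tensH_comp] at h,
    by have h := hB.tensH_le m.2.2 n.2.2; rwa [hB.tensH_comp] at h⟩

theorem Intertwines.tens {X X' Y Y' : (ModB B).Obj} {f : B.Hom X.1 Y.1} {g : B.Hom X'.1 Y'.1}
    (hf : Intertwines X Y f) (hg : Intertwines X' Y' g) :
    Intertwines (tensOb hB X X') (tensOb hB Y Y') (hB.tensH f g) := by
  show B.comp (hB.tensH X.2.1 X'.2.1) (hB.tensH f g) = B.comp (hB.tensH f g) (hB.tensH Y.2.1 Y'.2.1)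
  rw [← hB.tensH_comp, hf, hg, hB.tensH_comp]

theorem tensHom_lift {X X' Y Y' : (ModB B).Obj} {f : B.Hom X.1 Y.1} {g : B.Hom X'.1 Y'.1}
    (hf : Intertwines X Y f) (hg : Intertwines X' Y' g) :
    tensHom hB (lift X Y f hf) (lift X' Y' g hg)
      = lift (tensOb hB X X') (tensOb hB Y Y') (hB.tensH f g) (hf.tens hB hg) :=
  Subtype.ext (hB.tensH_comp _ _ _ _)

def diag (X : (ModB B).Obj) : B.Hom X.1 (hB.tens X.1 X.1) :=
  B.comp (hB.d X.1) (hB.tensH X.2.1 X.2.1)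

theorem monad_comp_t (X : (ModB B).Obj) : B.comp X.2.1 (hB.t X.1) = hB.t X.1 :=
  B.le_antisymm (hB.colax_t X.2.1) (le_comp_of_one_le_left X.2.2.1 _)

theorem diag_comp_monad (X : (ModB B).Obj) :
    B.comp (diag hB X) (hB.tensH X.2.1 X.2.1) = diag hB X := by
  rw [diag, B.comp_assoc, ← hB.tensH_comp, monad_comp_self]

theorem monad_comp_diag (X : (ModB B).Obj) : B.comp X.2.1 (diag hB X) = diag hB X := by
  refine B.le_antisymm ?_ (le_comp_of_one_le_left X.2.2.1 _)
  calc B.comp X.2.1 (diag hB X)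
        = B.comp (B.comp X.2.1 (hB.d X.1)) (hB.tensH X.2.1 X.2.1) := (B.comp_assoc _ _ _).symm
    _ ≤ B.comp (diag hB X) (hB.tensH X.2.1 X.2.1) := B.comp_le (hB.colax_d X.2.1) (B.le_refl _)
    _ = diag hB X := diag_comp_monad hB X

theorem diag_comp (X : (ModB B).Obj) {C : B.Obj} (h : B.Hom (hB.tens X.1 X.1) C) :
    B.comp (diag hB X) h = B.comp (hB.d X.1) (B.comp (hB.tensH X.2.1 X.2.1) h) :=
  B.comp_assoc _ _ _

theorem diag_coassoc (X : (ModB B).Obj) :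
    B.comp (B.comp (diag hB X) (hB.tensH (diag hB X) (B.idH X.1))) (hB.alp X.1 X.1 X.1)
      = B.comp (diag hB X) (hB.tensH (B.idH X.1) (diag hB X)) := by
  have hsplit : hB.tensH (diag hB X) X.2.1
      = B.comp (hB.tensH (hB.d X.1) (B.idH X.1)) (hB.tensH (hB.tensH X.2.1 X.2.1) X.2.1) := by
    rw [← hB.tensH_comp, B.id_comp]; rfl
  calc B.comp (B.comp (diag hB X) (hB.tensH (diag hB X) (B.idH X.1))) (hB.alp X.1 X.1 X.1)
      = B.comp (hB.d X.1) (B.comp (hB.tensH (diag hB X) X.2.1) (hB.alp X.1 X.1 X.1)) := by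
        rw [diag_comp, ← hB.tensH_comp, monad_comp_diag, B.comp_id, B.comp_assoc]
    _ = B.comp (B.comp (B.comp (hB.d X.1) (hB.tensH (hB.d X.1) (B.idH X.1))) (hB.alp X.1 X.1 X.1))
          (hB.tensH X.2.1 (hB.tensH X.2.1 X.2.1)) := by
        rw [hsplit, B.comp_assoc, hB.alp_nat]; simp only [B.comp_assoc]
    _ = B.comp (B.comp (hB.d X.1) (hB.tensH (B.idH X.1) (hB.d X.1)))
          (hB.tensH X.2.1 (hB.tensH X.2.1 X.2.1)) := by rw [hB.coassoc]
    _ = B.comp (diag hB X) (hB.tensH (B.idH X.1) (diag hB X)) := by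
        rw [B.comp_assoc, ← hB.tensH_comp, B.id_comp, diag_comp, ← hB.tensH_comp, B.comp_id,
          monad_comp_diag]
        rfl

theorem diag_counit_rho (X : (ModB B).Obj) :
    B.comp (diag hB X) (hB.tensH (B.idH X.1) (hB.t X.1)) = B.comp X.2.1 (hB.rho X.1) := by
  have h : hB.tensH X.2.1 (hB.t X.1)
      = B.comp (hB.tensH (B.idH X.1) (hB.t X.1)) (hB.tensH X.2.1 (B.idH hB.I)) := by
    rw [← hB.tensH_comp, B.id_comp, B.comp_id]
  rw [diag, B.comp_assoc, ← hB.tensH_comp, B.comp_id, monad_comp_t, h, ← B.comp_assoc,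
    hB.counit_rho, hB.rho_nat]

theorem diag_counit_lam (X : (ModB B).Obj) :
    B.comp (diag hB X) (hB.tensH (hB.t X.1) (B.idH X.1)) = B.comp X.2.1 (hB.lam X.1) := by
  have h : hB.tensH (hB.t X.1) X.2.1
      = B.comp (hB.tensH (hB.t X.1) (B.idH X.1)) (hB.tensH (B.idH hB.I) X.2.1) := by
    rw [← hB.tensH_comp, B.id_comp, B.comp_id]
  rw [diag, B.comp_assoc, ← hB.tensH_comp, B.comp_id, monad_comp_t, h, ← B.comp_assoc,
    hB.counit_lam, hB.lam_nat]

theorem diag_cocomm (X : (ModB B).Obj) : B.comp (diag hB X) (hB.gam X.1 X.1) = diag hB X := by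
  rw [diag, B.comp_assoc, hB.gam_nat, ← B.comp_assoc, hB.cocomm]

theorem diag_comp_tensH {X Y : (ModB B).Obj} (m : (ModB B).Hom X Y) :
    B.comp (diag hB X) (hB.tensH m.1 m.1) = B.comp (hB.d X.1) (hB.tensH m.1 m.1) := by
  rw [diag_comp, ← hB.tensH_comp, monad_comp]

theorem diag_colax {X Y : (ModB B).Obj} (m : (ModB B).Hom X Y) :
    B.le (B.comp m.1 (diag hB Y)) (B.comp (diag hB X) (hB.tensH m.1 m.1)) :=
  calc B.comp m.1 (diag hB Y)
      = B.comp (B.comp m.1 (hB.d Y.1)) (hB.tensH Y.2.1 Y.2.1) := (B.comp_assoc _ _ _).symm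
    _ ≤ B.comp (B.comp (hB.d X.1) (hB.tensH m.1 m.1)) (hB.tensH Y.2.1 Y.2.1) :=
        B.comp_le (hB.colax_d m.1) (B.le_refl _)
    _ = B.comp (diag hB X) (hB.tensH m.1 m.1) := by
        rw [B.comp_assoc, ← hB.tensH_comp, comp_monad, diag_comp_tensH]

def cartStr : (ModB B).CartStr where
  tens := tensOb hB
  tensH := tensHom hB
  tensH_le h₁ h₂ := hB.tensH_le h₁ h₂
  tensH_id _ _ := Subtype.ext rfl
  tensH_comp f₁ f₂ g₁ g₂ := Subtype.ext (hB.tensH_comp f₁.1 f₂.1 g₁.1 g₂.1)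
  I := unitOb hB
  rho X := lift _ _ (hB.rho X.1) (hB.rho_nat X.2.1)
  rhoInv X := lift _ _ (hB.rhoInv X.1)
    (comp_inv_eq_inv_comp (hB.rho_inv_right _) (hB.rho_inv_left _) (hB.rho_nat X.2.1))
  rho_inv_left X := by
    rw [lift_comp_lift, idH_eq_lift]; exact lift_congr (hB.rho_inv_left X.1)
  rho_inv_right X := by
    rw [lift_comp_lift, idH_eq_lift]; exact lift_congr (hB.rho_inv_right X.1)
  rho_nat f := comp_lift_eq_lift_comp _ (tensHom hB f _) _ _ (hB.rho_nat f.1)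
  lam X := lift _ _ (hB.lam X.1) (hB.lam_nat X.2.1)
  lamInv X := lift _ _ (hB.lamInv X.1)
    (comp_inv_eq_inv_comp (hB.lam_inv_right _) (hB.lam_inv_left _) (hB.lam_nat X.2.1))
  lam_inv_left X := by
    rw [lift_comp_lift, idH_eq_lift]; exact lift_congr (hB.lam_inv_left X.1)
  lam_inv_right X := by
    rw [lift_comp_lift, idH_eq_lift]; exact lift_congr (hB.lam_inv_right X.1)
  lam_nat f := comp_lift_eq_lift_comp _ (tensHom hB _ f) _ _ (hB.lam_nat f.1)
  gam X Y := lift _ _ (hB.gam X.1 Y.1) (hB.gam_nat X.2.1 Y.2.1)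
  gam_nat f g := comp_lift_eq_lift_comp _ (tensHom hB g f) _ _ (hB.gam_nat f.1 g.1)
  alp X Y Z := lift _ _ (hB.alp X.1 Y.1 Z.1) (hB.alp_nat X.2.1 Y.2.1 Z.2.1)
  alpInv X Y Z := lift _ _ (hB.alpInv X.1 Y.1 Z.1)
    (comp_inv_eq_inv_comp (hB.alp_inv_right _ _ _) (hB.alp_inv_left _ _ _)
      (hB.alp_nat X.2.1 Y.2.1 Z.2.1))
  alp_inv_left X Y Z := by
    rw [lift_comp_lift, idH_eq_lift]; exact lift_congr (hB.alp_inv_left X.1 Y.1 Z.1)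
  alp_inv_right X Y Z := by
    rw [lift_comp_lift, idH_eq_lift]; exact lift_congr (hB.alp_inv_right X.1 Y.1 Z.1)
  alp_nat f g h := comp_lift_eq_lift_comp _ (tensHom hB f (tensHom hB g h)) _ _
    (hB.alp_nat f.1 g.1 h.1)
  pentagon X Y Z W := by
    simp only [idH_eq_lift, tensHom_lift, lift_comp_lift]
    exact lift_congr (hB.pentagon X.1 Y.1 Z.1 W.1)
  triangle X Y := by
    simp only [idH_eq_lift, tensHom_lift, lift_comp_lift]
    exact lift_congr (hB.triangle X.1 Y.1)
  hexagon X Y Z := by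
    simp only [idH_eq_lift, tensHom_lift, lift_comp_lift]
    exact lift_congr (hB.hexagon X.1 Y.1 Z.1)
  symm X Y := by
    rw [lift_comp_lift, idH_eq_lift]; exact lift_congr (hB.symm X.1 Y.1)
  d X := lift _ _ (diag hB X) ((monad_comp_diag hB X).trans (diag_comp_monad hB X).symm)
  t X := lift _ _ (hB.t X.1) ((monad_comp_t hB X).trans (B.comp_id _).symm)
  coassoc X := by
    simp only [idH_eq_lift, tensHom_lift, lift_comp_lift]
    exact lift_congr (diag_coassoc hB X)
  counit_rho X := by
    simp only [idH_eq_lift, tensHom_lift, lift_comp_lift]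
    exact lift_eq_lift (by rw [diag_counit_rho, ← B.comp_assoc, monad_comp_self])
  counit_lam X := by
    simp only [idH_eq_lift, tensHom_lift, lift_comp_lift]
    exact lift_eq_lift (by rw [diag_counit_lam, ← B.comp_assoc, monad_comp_self])
  cocomm X := by
    simp only [lift_comp_lift]
    exact lift_congr (diag_cocomm hB X)
  colax_d {X Y} m := by
    show B.le (B.comp m.1 (B.comp Y.2.1 (diag hB Y)))
      (B.comp (B.comp X.2.1 (diag hB X)) (hB.tensH m.1 m.1))
    rw [monad_comp_diag, monad_comp_diag]
    exact diag_colax hB m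
  colax_t {X Y} m := by
    show B.le (B.comp m.1 (B.comp Y.2.1 (hB.t Y.1))) (B.comp X.2.1 (hB.t X.1))
    rw [← B.comp_assoc, comp_monad, monad_comp_t]
    exact hB.colax_t m.1
  d_map X := isMap_of_val_eq_comp _ (monad_comp_diag hB X) (hB.d_map X.1) (hB.colax_d X.2.1)
  t_map X := isMap_of_val_eq_comp _ ((monad_comp_t hB X).trans (B.comp_id _).symm) (hB.t_map X.1)
    (by rw [B.comp_id]; exact hB.colax_t X.2.1)

end Cartesian

end ModB

end LoBicat

/-- STATEMENT 2: If `B` is a locally ordered Cartesian bicategory, then the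
bicategory `Mod B` of monads and modules in `B` is a locally ordered Cartesian
bicategory too. -/
theorem statement2 (B : LoBicat) (hB : B.CartStr) : Nonempty (ModB B).CartStr :=
  ⟨ModB.cartStr hB⟩
end

section
/- For a finitely complete category E, the bicategory Span(E) is precartesian: (i) Map(Span(E)) has finite bicategorical products, given by the terminal object of E and by A × B with projection maps the spans (1, A×B, p) and (1, A×B, r); (ii) each hom-category Span(E)(A,B) has finite products, with terminal object the span (p, A×B, r) and binary products computed by pullback over A×B. -/
universe u v

open CategoryTheory CategoryTheory.Limits

/-- A span `A ← R → X` in `E`, i.e. a 1-cell of the bicategory `Span(E)`. -/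
structure SpanT (E : Type u) [Category.{v} E] (A X : E) where
  R : E
  l : R ⟶ A
  r : R ⟶ X

variable {E : Type u} [Category.{v} E]

/-- A 2-cell of `Span(E)`: a morphism of spans. -/
structure Span2 {A X : E} (s t : SpanT E A X) where
  k : s.R ⟶ t.R
  wl : k ≫ t.l = s.l
  wr : k ≫ t.r = s.r

/-- The identity 2-cell. -/
def Span2.idm {A X : E} (s : SpanT E A X) : Span2 s s :=
  ⟨𝟙 _, by simp, by simp⟩

/-- Vertical composition of 2-cells. -/
def Span2.vcomp {A X : E} {s t u : SpanT E A X} (φ : Span2 s t) (ψ : Span2 t u) :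
    Span2 s u :=
  ⟨φ.k ≫ ψ.k, by rw [Category.assoc, ψ.wl, φ.wl], by rw [Category.assoc, ψ.wr, φ.wr]⟩

/-- Invertibility of a 2-cell of spans. -/
def IsSpan2Iso {A X : E} {s t : SpanT E A X} (φ : Span2 s t) : Prop :=
  ∃ ψ : Span2 t s, φ.vcomp ψ = Span2.idm s ∧ ψ.vcomp φ = Span2.idm t

/-- A span is a map (has a right adjoint in `Span(E)`) exactly when its left
leg is invertible. -/
def IsMapSpan {A X : E} (s : SpanT E A X) : Prop := IsIso s.l

/-- Composition of spans, by pullback. -/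
noncomputable def spanComp [HasPullbacks E] {A X Y : E} (s : SpanT E A X) (t : SpanT E X Y) :
    SpanT E A Y :=
  ⟨pullback s.r t.l, pullback.fst s.r t.l ≫ s.l, pullback.snd s.r t.l ≫ t.r⟩

/-- Right whiskering of a 2-cell of spans with a span. -/
noncomputable def whiskerRSpan [HasPullbacks E] {A X Y : E} {s s' : SpanT E A X} (φ : Span2 s s')
    (t : SpanT E X Y) : Span2 (spanComp s t) (spanComp s' t) where
  k := pullback.map s.r t.l s'.r t.l φ.k (𝟙 _) (𝟙 _)
    (by rw [Category.comp_id, φ.wr]) (by simp)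
  wl := by
    show _ ≫ pullback.fst s'.r t.l ≫ s'.l = pullback.fst s.r t.l ≫ s.l
    rw [← Category.assoc, pullback.lift_fst, Category.assoc, φ.wl]
  wr := by
    show _ ≫ pullback.snd s'.r t.l ≫ t.r = pullback.snd s.r t.l ≫ t.r
    rw [← Category.assoc, pullback.lift_snd, Category.comp_id]

/-! Two observations carry the proof. A 2-cell of spans is determined by its component, and a
2-cell into a span whose legs are jointly monic — a map, or `(fst, A ⨯ B, snd)` — is determined by
its composites with the legs, hence unique. And composing a span with the map `p_* = (1, p)` is a
pullback along an identity, so up to an invertible 2-cell it just postcomposes the right leg with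
`p`: the composites of a map `h : C → A ⨯ B` with the projection maps are the components of its
right leg. Binary products in `Span(E)(A, B)` are pullbacks over `A ⨯ B` of the paired legs. -/

attribute [local simp] prod.lift_fst prod.lift_snd prod.lift_fst_assoc prod.lift_snd_assoc
  pullback.lift_fst pullback.lift_snd pullback.lift_fst_assoc pullback.lift_snd_assoc

namespace Span2

variable {A X : E} {s t : SpanT E A X}

@[ext]
lemma ext {φ ψ : Span2 s t} (h : φ.k = ψ.k) : φ = ψ := by
  cases φ; cases ψ; congr

lemma isSpan2Iso_of_isIso (φ : Span2 s t) [IsIso φ.k] : IsSpan2Iso φ :=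
  ⟨⟨inv φ.k, by simp [IsIso.inv_comp_eq, φ.wl], by simp [IsIso.inv_comp_eq, φ.wr]⟩,
    by ext; exact IsIso.hom_inv_id φ.k, by ext; exact IsIso.inv_hom_id φ.k⟩

lemma k_eq_of_isIso (φ : Span2 s t) [IsIso t.l] : φ.k = s.l ≫ inv t.l := by
  rw [IsIso.eq_comp_inv, φ.wl]

instance {u : SpanT E A X} (φ : Span2 s t) (ψ : Span2 t u) [IsIso φ.k] [IsIso ψ.k] :
    IsIso (φ.vcomp ψ).k :=
  inferInstanceAs (IsIso (φ.k ≫ ψ.k))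

instance [IsIso t.l] : Subsingleton (Span2 s t) :=
  ⟨fun φ ψ => Span2.ext (by rw [k_eq_of_isIso φ, k_eq_of_isIso ψ])⟩

end Span2

abbrev SpanT.ofHom {Z X : E} (p : Z ⟶ X) : SpanT E Z X := ⟨Z, 𝟙 Z, p⟩

abbrev SpanT.postcomp {A Z X : E} (s : SpanT E A Z) (p : Z ⟶ X) : SpanT E A X := ⟨s.R, s.l, s.r ≫ p⟩

lemma isMapSpan_ofHom {Z X : E} (p : Z ⟶ X) : IsMapSpan (SpanT.ofHom p) :=
  inferInstanceAs (IsIso (𝟙 Z))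

/-- Every map `f` is isomorphic to `q_*` for `q = f.l⁻¹ ≫ f.r`. -/
noncomputable def Span2.ofHomToMap {C A : E} (f : SpanT E C A) [IsIso f.l] (q : C ⟶ A)
    (hq : f.l ≫ q = f.r) :
    Span2 (SpanT.ofHom q) f :=
  ⟨inv f.l, by simp, by simp [← hq]⟩

instance {C A : E} (f : SpanT E C A) [IsIso f.l] (q : C ⟶ A) (hq : f.l ≫ q = f.r) :
    IsIso (Span2.ofHomToMap f q hq).k :=
  inferInstanceAs (IsIso (inv f.l))

section Composition

variable [HasPullbacks E] {A Z X : E}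

/-- Composing with `p_*` is computed by a pullback along an identity, so it only postcomposes the
right leg with `p`. -/
noncomputable def spanCompOfHomHom (s : SpanT E A Z) (p : Z ⟶ X) :
    Span2 (spanComp s (SpanT.ofHom p)) (s.postcomp p) where
  k := pullback.fst s.r (𝟙 Z)
  wl := rfl
  wr := by simp [spanComp, pullback.condition_assoc]

instance (s : SpanT E A Z) (p : Z ⟶ X) : IsIso (spanCompOfHomHom s p).k :=
  inferInstanceAs (IsIso (pullback.fst s.r (𝟙 Z)))

noncomputable def spanCompOfHomInv (s : SpanT E A Z) (p : Z ⟶ X) :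
    Span2 (s.postcomp p) (spanComp s (SpanT.ofHom p)) where
  k := (pullback.lift (𝟙 s.R) s.r (by simp) : s.R ⟶ pullback s.r (𝟙 Z))
  wl := by simp [spanComp]
  wr := by simp [spanComp]

instance (s : SpanT E A Z) [IsIso s.l] (p : Z ⟶ X) : IsIso (spanComp s (SpanT.ofHom p)).l :=
  inferInstanceAs (IsIso (pullback.fst s.r (𝟙 Z) ≫ s.l))

/-- Transported along the comparisons with `postcomp`, `β` becomes a 2-cell into a map, whose
component is therefore `h.l ≫ inv h'.l`. -/
lemma comp_right_eq_of_span2_compOfHom (h h' : SpanT E A Z) [IsIso h'.l] (p : Z ⟶ X)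
    (β : Span2 (spanComp h (SpanT.ofHom p)) (spanComp h' (SpanT.ofHom p))) :
    (h.l ≫ inv h'.l) ≫ h'.r ≫ p = h.r ≫ p := by
  let δ := ((spanCompOfHomInv h p).vcomp β).vcomp (spanCompOfHomHom h' p)
  rw [← Span2.k_eq_of_isIso δ]
  exact δ.wr

end Composition

theorem isMapSpan_terminal_unique [HasTerminal E] (A : E) :
    IsMapSpan (SpanT.ofHom (terminal.from A)) ∧
      ∀ m m' : SpanT E A (⊤_ E), IsMapSpan m → IsMapSpan m' →
        Nonempty (Span2 m m') ∧ ∀ φ ψ : Span2 m m', φ = ψ := by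
  refine ⟨isMapSpan_ofHom _, fun m m' _ hm' => ?_⟩
  have : IsIso m'.l := hm'
  exact ⟨⟨⟨m.l ≫ inv m'.l, by simp, terminal.hom_ext _ _⟩⟩, Subsingleton.elim⟩

section BinaryProduct

variable [HasPullbacks E] [HasBinaryProducts E] {A B C : E}

theorem exists_isMapSpan_pairing (f : SpanT E C A) (g : SpanT E C B) (hf : IsMapSpan f)
    (hg : IsMapSpan g) :
    ∃ h : SpanT E C (A ⨯ B), IsMapSpan h ∧
      (∃ φ : Span2 (spanComp h (SpanT.ofHom prod.fst)) f, IsSpan2Iso φ) ∧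
      (∃ ψ : Span2 (spanComp h (SpanT.ofHom prod.snd)) g, IsSpan2Iso ψ) := by
  have : IsIso f.l := hf
  have : IsIso g.l := hg
  let h : SpanT E C (A ⨯ B) := SpanT.ofHom (prod.lift (inv f.l ≫ f.r) (inv g.l ≫ g.r))
  exact ⟨h, isMapSpan_ofHom _,
    ⟨_, Span2.isSpan2Iso_of_isIso
      ((spanCompOfHomHom h _).vcomp (Span2.ofHomToMap f _ (by simp [h])))⟩,
    ⟨_, Span2.isSpan2Iso_of_isIso
      ((spanCompOfHomHom h _).vcomp (Span2.ofHomToMap g _ (by simp [h])))⟩⟩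

theorem existsUnique_span2_whiskerRSpan_prod (h h' : SpanT E C (A ⨯ B)) (hh' : IsMapSpan h')
    (β : Span2 (spanComp h (SpanT.ofHom prod.fst)) (spanComp h' (SpanT.ofHom prod.fst)))
    (γ : Span2 (spanComp h (SpanT.ofHom prod.snd)) (spanComp h' (SpanT.ofHom prod.snd))) :
    ∃! α : Span2 h h',
      whiskerRSpan α (SpanT.ofHom prod.fst) = β ∧ whiskerRSpan α (SpanT.ofHom prod.snd) = γ := by
  have : IsIso h'.l := hh'
  have hr : (h.l ≫ inv h'.l) ≫ h'.r = h.r := prod.hom_ext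
    (by simpa using comp_right_eq_of_span2_compOfHom h h' _ β)
    (by simpa using comp_right_eq_of_span2_compOfHom h h' _ γ)
  exact ⟨⟨h.l ≫ inv h'.l, by simp, hr⟩, ⟨Subsingleton.elim _ _, Subsingleton.elim _ _⟩,
    fun _ _ => Subsingleton.elim _ _⟩

end BinaryProduct

section LocalProducts

variable [HasBinaryProducts E] {A B : E}

noncomputable def SpanT.top (A B : E) : SpanT E A B := ⟨A ⨯ B, prod.fst, prod.snd⟩

theorem span2_top_unique (s : SpanT E A B) :
    Nonempty (Span2 s (SpanT.top A B)) ∧ ∀ φ ψ : Span2 s (SpanT.top A B), φ = ψ :=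
  ⟨⟨⟨prod.lift s.l s.r, by simp [SpanT.top], by simp [SpanT.top]⟩⟩, fun φ ψ =>
    Span2.ext (prod.hom_ext (φ.wl.trans ψ.wl.symm) (φ.wr.trans ψ.wr.symm))⟩

variable [HasPullbacks E] (s t : SpanT E A B)

noncomputable def SpanT.localProd : SpanT E A B :=
  ⟨pullback (prod.lift s.l s.r) (prod.lift t.l t.r),
    pullback.fst _ _ ≫ s.l, pullback.fst _ _ ≫ s.r⟩

noncomputable def SpanT.localProdFst : Span2 (s.localProd t) s := ⟨pullback.fst _ _, rfl, rfl⟩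

noncomputable def SpanT.localProdSnd : Span2 (s.localProd t) t where
  k := pullback.snd _ _
  wl := by
    show pullback.snd _ _ ≫ t.l = pullback.fst _ _ ≫ s.l
    simpa using (pullback.condition (f := prod.lift s.l s.r) (g := prod.lift t.l t.r) =≫ prod.fst).symm
  wr := by
    show pullback.snd _ _ ≫ t.r = pullback.fst _ _ ≫ s.r
    simpa using (pullback.condition (f := prod.lift s.l s.r) (g := prod.lift t.l t.r) =≫ prod.snd).symm

theorem SpanT.existsUnique_lift_localProd (L : SpanT E A B) (u : Span2 L s) (v : Span2 L t) :
    ∃! w : Span2 L (s.localProd t), w.vcomp (s.localProdFst t) = u ∧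
      w.vcomp (s.localProdSnd t) = v := by
  have hw : u.k ≫ prod.lift s.l s.r = v.k ≫ prod.lift t.l t.r := by
    ext <;> simp [u.wl, v.wl, u.wr, v.wr]
  refine ⟨⟨pullback.lift u.k v.k hw, ?_, ?_⟩, ⟨?_, ?_⟩, ?_⟩
  · simp [localProd, u.wl]
  · simp [localProd, u.wr]
  · ext; exact pullback.lift_fst _ _ _
  · ext; exact pullback.lift_snd _ _ _
  · rintro w ⟨rfl, rfl⟩
    ext
    exact pullback.hom_ext (pullback.lift_fst _ _ _).symm (pullback.lift_snd _ _ _).symm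

end LocalProducts

/-- STATEMENT 6: For a finitely complete category `E`, the bicategory
`Span(E)` is precartesian:
(i) `Map(Span(E))` has finite bicategorical products, given by the terminal
object of `E` (the span `A ← A → 1` being the unique map to it, up to a
unique invertible 2-cell) and by `A ⨯ B` with projection maps the spans
`(1, A ⨯ B, fst)` and `(1, A ⨯ B, snd)` (the comparison functor being an
equivalence, i.e. essentially surjective and fully faithful);
(ii) each hom-category `Span(E)(A,B)` has finite products, with terminal
object the span `(fst, A ⨯ B, snd)` and binary products computed by pullback
over `A ⨯ B`. -/
theorem statement6 (E : Type u) [Category.{v} E] [HasFiniteLimits E] :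
    -- (i) terminal object of Map(Span(E))
    (∀ A : E,
      IsMapSpan (⟨A, 𝟙 A, terminal.from A⟩ : SpanT E A (⊤_ E)) ∧
      ∀ m m' : SpanT E A (⊤_ E), IsMapSpan m → IsMapSpan m' →
        (Nonempty (Span2 m m') ∧ ∀ φ ψ : Span2 m m', φ = ψ)) ∧
    -- (i) binary products in Map(Span(E))
    (∀ A B : E,
      IsMapSpan (⟨A ⨯ B, 𝟙 _, Limits.prod.fst⟩ : SpanT E (A ⨯ B) A) ∧
      IsMapSpan (⟨A ⨯ B, 𝟙 _, Limits.prod.snd⟩ : SpanT E (A ⨯ B) B) ∧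
      -- the comparison functor is essentially surjective on maps
      (∀ (C : E) (f : SpanT E C A) (g : SpanT E C B), IsMapSpan f → IsMapSpan g →
        ∃ h : SpanT E C (A ⨯ B), IsMapSpan h ∧
          (∃ φ : Span2 (spanComp h ⟨A ⨯ B, 𝟙 _, Limits.prod.fst⟩) f, IsSpan2Iso φ) ∧
          (∃ ψ : Span2 (spanComp h ⟨A ⨯ B, 𝟙 _, Limits.prod.snd⟩) g, IsSpan2Iso ψ)) ∧
      -- and fully faithful on maps
      (∀ (C : E) (h h' : SpanT E C (A ⨯ B)), IsMapSpan h → IsMapSpan h' →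
        ∀ (β : Span2 (spanComp h ⟨A ⨯ B, 𝟙 _, Limits.prod.fst⟩)
                     (spanComp h' ⟨A ⨯ B, 𝟙 _, Limits.prod.fst⟩))
          (γ : Span2 (spanComp h ⟨A ⨯ B, 𝟙 _, Limits.prod.snd⟩)
                     (spanComp h' ⟨A ⨯ B, 𝟙 _, Limits.prod.snd⟩)),
          ∃! α : Span2 h h',
            whiskerRSpan α ⟨A ⨯ B, 𝟙 _, Limits.prod.fst⟩ = β ∧
            whiskerRSpan α ⟨A ⨯ B, 𝟙 _, Limits.prod.snd⟩ = γ)) ∧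
    -- (ii) local terminal objects
    (∀ (A B : E) (s : SpanT E A B),
      Nonempty (Span2 s ⟨A ⨯ B, Limits.prod.fst, Limits.prod.snd⟩) ∧
      ∀ φ ψ : Span2 s ⟨A ⨯ B, Limits.prod.fst, Limits.prod.snd⟩, φ = ψ) ∧
    -- (ii) binary local products, computed by pullback over A ⨯ B
    (∀ (A B : E) (s t : SpanT E A B),
      ∃ (P : SpanT E A B) (π : Span2 P s) (ρ : Span2 P t),
        P.R = pullback (prod.lift s.l s.r) (prod.lift t.l t.r) ∧
        ∀ (L : SpanT E A B) (u : Span2 L s) (v : Span2 L t),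
          ∃! w : Span2 L P, w.vcomp π = u ∧ w.vcomp ρ = v) := by
  exact ⟨isMapSpan_terminal_unique, fun A B => ⟨isMapSpan_ofHom _, isMapSpan_ofHom _,
    fun C f g => exists_isMapSpan_pairing f g,
    fun C h h' _ hh' => existsUnique_span2_whiskerRSpan_prod h h' hh'⟩,
    fun A B => span2_top_unique,
    fun A B s t => ⟨s.localProd t, s.localProdFst t, s.localProdSnd t, rfl,
      s.existsUnique_lift_localProd t⟩⟩
end
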